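/- arXiv:2303.05364 — 10 statements merged into one kernel-verified Lean document; each statement's English description precedes it below -/
import Mathlib

section
/- Let A, B, C, D be objects in an abelian category, and suppose we have morphisms f : A → C, g : B → C, and h : B → D such that the morphism A ⊕ B → C ⊕ D given by the matrix [[f, g], [0, h]] is an isomorphism. Then f is a monomorphism, C is isomorphic to A ⊕ coker(f), and B is isomorphic to coker(f) ⊕ D. -/
open CategoryTheory Limits

/-- The cokernel of `f ≫ biprod.inl : A ⟶ C ⊞ D` is `cokernel f ⊞ D`. -/
noncomputable def cokernelCompBiprodInlIso {𝒜 : Type*} [Category 𝒜] [Abelian 𝒜]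
    {A C D : 𝒜} (f : A ⟶ C) :
    cokernel (f ≫ (biprod.inl : C ⟶ C ⊞ D)) ≅ cokernel f ⊞ D := by
  refine colimit.isoColimitCocone ⟨_, CokernelCofork.IsColimit.ofπ
    (biprod.map (cokernel.π f) (𝟙 D)) (by simp)
    (fun {Z'} g' hg' => biprod.desc
      (cokernel.desc f (biprod.inl ≫ g') (by simpa using hg'))
      (biprod.inr ≫ g'))
    (fun {Z'} g' hg' => ?_) (fun {Z'} g' hg' m hm => ?_)⟩
  · ext <;> simp
  · apply biprod.hom_ext'
    · rw [← cancel_epi (cokernel.π f)]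
      simp [← hm]
    · simp [← hm]

/-- In an abelian category, if the matrix morphism
`[[f, g], [0, h]] : A ⊞ B ⟶ C ⊞ D` is an isomorphism, then `f` is a monomorphism,
`C ≅ A ⊞ coker f`, and `B ≅ coker f ⊞ D`. -/
theorem stmt0 {𝒜 : Type*} [Category 𝒜] [Abelian 𝒜]
    (A B C D : 𝒜) (f : A ⟶ C) (g : B ⟶ C) (h : B ⟶ D)
    (hiso : IsIso (biprod.desc (biprod.lift f (0 : A ⟶ D)) (biprod.lift g h))) :
    Mono f ∧ Nonempty (C ≅ A ⊞ cokernel f) ∧ Nonempty (B ≅ cokernel f ⊞ D) := by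
  set M := biprod.desc (biprod.lift f (0 : A ⟶ D)) (biprod.lift g h) with hM
  have key : f ≫ (biprod.inl : C ⟶ C ⊞ D) = (biprod.inl : A ⟶ A ⊞ B) ≫ M := by
    ext <;> simp [hM]
  haveI : IsSplitMono f := IsSplitMono.mk'
    { retraction := biprod.inl ≫ inv M ≫ biprod.fst
      id := by
        rw [← Category.assoc, key, Category.assoc, IsIso.hom_inv_id_assoc,
          biprod.inl_fst] }
  refine ⟨inferInstance, ⟨biprod.uniqueUpToIso A (cokernel f)
    (isBilimitBinaryBiconeOfIsSplitMonoOfCokernel (cokernelIsCokernel f))⟩,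
    ⟨?_⟩⟩
  exact (cokernelBiprodInlIso (X := A) (Y := B)).symm ≪≫
    cokernel.mapIso _ (f ≫ (biprod.inl : C ⟶ C ⊞ D)) (Iso.refl A) (asIso M)
      (by simpa using key.symm) ≪≫
    cokernelCompBiprodInlIso f
end

section
/- Let V be a module over the Lie algebra sl₂(ℂ) with generators X, Y, H satisfying [H,X]=2X, [H,Y]=−2Y, [X,Y]=H, which integrates to a representation of SL₂(ℂ), and let w denote the action of the Weil element. If v ∈ V is primitive of weight −k (i.e. Hv = −kv and X^{k+1}v = 0), then for every 0 ≤ j ≤ k one has w(X^j v / j!) = (−1)^j X^{k−j} v / (k−j)!. -/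
open Module

/-- The exponential of a nilpotent endomorphism of a finite-dimensional space, computed as the
(finite) sum `∑_{m ≤ finrank V} X^m / m!`.  For a nilpotent endomorphism of a
finite-dimensional space this agrees with the usual exponential series. -/
noncomputable def nilExp {V : Type*} [AddCommGroup V] [Module ℂ V]
    (N : ℕ) (X : Module.End ℂ V) : Module.End ℂ V :=
  ∑ m ∈ Finset.range (N + 1), ((m.factorial : ℂ))⁻¹ • X ^ m

namespace Stmt2Aux

open Finset

/- ### Scalar combinatorial lemmas -/

lemma descFactorial_add' (k i t : ℕ) :
    k.descFactorial (i + t) = k.descFactorial i * (k - i).descFactorial t := by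
  induction t with
  | zero => simp
  | succ t ih =>
    rw [← Nat.add_assoc, Nat.descFactorial_succ, ih, Nat.descFactorial_succ]
    have : k - (i + t) = k - i - t := by omega
    rw [this]
    ring

lemma coeff_id (k i : ℕ) (hik : i ≤ k) :
    ∑ n ∈ Finset.Ico i (k+1), ((-1:ℂ))^n * (k.descFactorial n : ℂ) * (((n-i).factorial:ℂ))⁻¹
    = if i = k then ((-1:ℂ))^k * (k.factorial:ℂ) else 0 := by
  rw [Finset.sum_Ico_eq_sum_range]
  have hki : k + 1 - i = (k - i) + 1 := by omega
  rw [hki]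
  have hterm : ∀ t, ((-1:ℂ))^(i+t) * (k.descFactorial (i+t) : ℂ) * (((i+t-i).factorial:ℂ))⁻¹
      = ((-1:ℂ))^i * (k.descFactorial i : ℂ) * (((-1:ℂ))^t * ((k-i).choose t : ℂ)) := by
    intro t
    have h1 : i + t - i = t := by omega
    rw [h1, descFactorial_add' k i t, Nat.descFactorial_eq_factorial_mul_choose (k-i) t]
    have h2 : ((t.factorial : ℂ)) ≠ 0 := Nat.cast_ne_zero.2 t.factorial_ne_zero
    push_cast
    rw [pow_add]
    field_simp
  rw [Finset.sum_congr rfl fun t _ => hterm t, ← Finset.mul_sum]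
  have halt : ∑ t ∈ range ((k-i)+1), ((-1:ℂ))^t * ((k-i).choose t : ℂ)
      = if k - i = 0 then 1 else 0 := by
    have h0 := Int.alternating_sum_range_choose (n := k - i)
    have h1 : ((∑ t ∈ range ((k-i)+1), (-1:ℤ)^t * ((k-i).choose t) : ℤ) : ℂ)
        = ∑ t ∈ range ((k-i)+1), ((-1:ℂ))^t * ((k-i).choose t : ℂ) := by
      push_cast
      rfl
    rw [← h1, h0]
    split_ifs <;> norm_num
  rw [halt]
  by_cases h : i = k
  · subst h; simp [Nat.descFactorial_self]
  · have : ¬ (k - i = 0) := by omega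
    rw [if_neg this, if_neg h, mul_zero]

lemma coeff_id' (k i : ℕ) (hik : i ≤ k) :
    ∑ n ∈ Finset.range (k+1),
      (if i ≤ n then ((-1:ℂ))^n * (k.descFactorial n : ℂ) * (((n-i).factorial:ℂ))⁻¹ else 0)
    = if i = k then ((-1:ℂ))^k * (k.factorial:ℂ) else 0 := by
  rw [← Finset.sum_filter]
  have h : Finset.filter (fun n => i ≤ n) (Finset.range (k+1)) = Finset.Ico i (k+1) := by
    ext n; simp [Finset.mem_Ico]; omega
  rw [h]
  exact coeff_id k i hik

lemma fact_coeff (m : ℕ) :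
    ((Nat.factorial (m+1) :ℂ))⁻¹ * ((m:ℂ)+1) = ((Nat.factorial m :ℂ))⁻¹ := by
  have h1 : (m.factorial : ℂ) ≠ 0 := Nat.cast_ne_zero.2 m.factorial_ne_zero
  have h2 : ((m:ℂ)+1) ≠ 0 := Nat.cast_add_one_ne_zero m
  rw [Nat.factorial_succ, Nat.cast_mul, mul_inv]
  push_cast
  field_simp

/- ### Commutation lemmas for powers -/

variable {V : Type*} [AddCommGroup V] [Module ℂ V]

lemma comm_H_pow (X H : Module.End ℂ V) (h : H * X = X * H + (2:ℂ) • X) (n : ℕ) :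
    H * X ^ n = X ^ n * H + ((2 * n : ℂ)) • X ^ n := by
  induction n with
  | zero => simp
  | succ n ih =>
    rw [pow_succ, ← mul_assoc, ih, add_mul, smul_mul_assoc, mul_assoc, h]
    rw [mul_add, mul_smul_comm, ← mul_assoc, ← pow_succ]
    push_cast
    module

lemma comm_pow_Y (X Y H : Module.End ℂ V) (h : H * X = X * H + (2:ℂ) • X)
    (hXY : X * Y = Y * X + H) (n : ℕ) :
    X ^ n * Y = Y * X ^ n + (n : ℂ) • (X ^ (n-1) * H) + ((n : ℂ) * ((n:ℂ)-1)) • X ^ (n-1) := by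
  induction n with
  | zero => simp
  | succ n ih =>
    rw [pow_succ', mul_assoc, ih]
    rw [mul_add, mul_add, ← mul_assoc, hXY, mul_smul_comm, mul_smul_comm]
    rw [← mul_assoc, ← pow_succ']
    cases n with
    | zero => simp
    | succ m =>
      simp only [Nat.add_sub_cancel]
      rw [add_mul, mul_assoc, ← pow_succ', comm_H_pow X H h (m+1)]
      push_cast
      match_scalars <;> ring

/- ### nilExp lemmas -/

lemma nilExp_mul_X (N : ℕ) (X : Module.End ℂ V) : nilExp N X * X = X * nilExp N X := by
  rw [nilExp, Finset.sum_mul, Finset.mul_sum]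
  exact Finset.sum_congr rfl fun n _ => by
    rw [smul_mul_assoc, mul_smul_comm, ← pow_succ, ← pow_succ']

lemma nilExp_apply (N : ℕ) (X : Module.End ℂ V) (u : V) :
    nilExp N X u = ∑ n ∈ range (N+1), ((n.factorial:ℂ))⁻¹ • (X^n) u := by
  rw [nilExp, LinearMap.sum_apply]
  exact Finset.sum_congr rfl fun n _ => rfl

lemma nilExp_mul_H (N : ℕ) (X H : Module.End ℂ V) (h : H * X = X * H + (2:ℂ) • X)
    (hN : X ^ (N+1) = 0) :
    nilExp N X * H = H * nilExp N X - (2:ℂ) • (X * nilExp N X) := by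
  have key : ∀ n : ℕ, X ^ n * H = H * X ^ n - ((2*n:ℂ)) • X ^ n := by
    intro n; rw [comm_H_pow X H h n]; abel
  rw [nilExp, Finset.sum_mul, Finset.mul_sum]
  have h2 : ∀ n ∈ range (N+1), ((n.factorial:ℂ))⁻¹ • X ^ n * H
      = H * ((n.factorial:ℂ))⁻¹ • X ^ n - (((n.factorial:ℂ))⁻¹ * (2*n)) • X ^ n := by
    intro n _
    rw [smul_mul_assoc, key n, mul_smul_comm, smul_sub, smul_smul]
  rw [Finset.sum_congr rfl h2, Finset.sum_sub_distrib]
  congr 1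
  rw [Finset.mul_sum, Finset.smul_sum]
  rw [Finset.sum_range_succ']
  simp only [Nat.cast_zero, mul_zero, zero_smul, add_zero, Nat.cast_ofNat]
  rw [Finset.sum_range_succ]
  have hlast : (2:ℂ) • (X * ((Nat.factorial N:ℂ))⁻¹ • X ^ N) = 0 := by
    rw [mul_smul_comm, ← pow_succ', hN]; simp
  rw [hlast, add_zero]
  refine Finset.sum_congr rfl fun m _ => ?_
  rw [mul_smul_comm, ← pow_succ', smul_smul]
  congr 1
  have h1 : (m.factorial : ℂ) ≠ 0 := Nat.cast_ne_zero.2 m.factorial_ne_zero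
  have h2 : ((m:ℂ)+1) ≠ 0 := Nat.cast_add_one_ne_zero m
  rw [Nat.factorial_succ, Nat.cast_mul, mul_inv]
  push_cast
  field_simp

lemma nilExp_mul_Y (N : ℕ) (X Y H : Module.End ℂ V) (h : H * X = X * H + (2:ℂ) • X)
    (hXY : X * Y = Y * X + H) (hN : X ^ N = 0) :
    nilExp N X * Y = Y * nilExp N X + nilExp N X * H + X * nilExp N X := by
  rw [nilExp]
  simp only [Finset.sum_mul, Finset.mul_sum]
  have step : ∀ n ∈ range (N+1), ((n.factorial:ℂ))⁻¹ • X ^ n * Y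
      = ((n.factorial:ℂ))⁻¹ • (Y * X ^ n) + (((n.factorial:ℂ))⁻¹ * n) • (X ^ (n-1) * H)
        + (((n.factorial:ℂ))⁻¹ * ((n:ℂ) * ((n:ℂ)-1))) • X ^ (n-1) := by
    intro n _
    rw [smul_mul_assoc, comm_pow_Y X Y H h hXY n, smul_add, smul_add, smul_smul, smul_smul]
  rw [Finset.sum_congr rfl step, Finset.sum_add_distrib, Finset.sum_add_distrib]
  congr 1
  · congr 1
    · exact Finset.sum_congr rfl fun n _ => by rw [mul_smul_comm]
    · rw [Finset.sum_range_succ' (fun n => (((n.factorial:ℂ))⁻¹ * n) • (X ^ (n-1) * H)) N]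
      simp only [Nat.cast_zero, mul_zero, zero_smul, add_zero, Nat.add_sub_cancel]
      rw [Finset.sum_range_succ (fun n => ((n.factorial:ℂ))⁻¹ • X ^ n * H) N]
      rw [hN]
      simp only [zero_mul, smul_zero, smul_mul_assoc, add_zero]
      refine Finset.sum_congr rfl fun m _ => ?_
      push_cast
      rw [fact_coeff m]
  · rw [Finset.sum_range_succ'
      (fun n => (((n.factorial:ℂ))⁻¹ * ((n:ℂ) * ((n:ℂ)-1))) • X ^ (n-1)) N]
    simp only [Nat.cast_zero, zero_mul, mul_zero, zero_smul, add_zero, Nat.add_sub_cancel]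
    have e1 : ∀ m ∈ range N, ((((m+1).factorial:ℂ))⁻¹ * (((m:ℂ)+1) * (((m:ℂ)+1)-1))) • X ^ m
        = (((m.factorial:ℂ))⁻¹ * m) • X ^ m := by
      intro m _
      congr 1
      rw [← mul_assoc, fact_coeff m]
      ring
    rw [Finset.sum_congr rfl (by intro m hm; push_cast; exact e1 m hm)]
    have hNz : (((N.factorial:ℂ))⁻¹ * N) • X ^ N = 0 := by rw [hN]; simp
    rw [← add_zero (∑ m ∈ range N, (((m.factorial:ℂ))⁻¹ * m) • X ^ m), ← hNz,
        ← Finset.sum_range_succ (fun m => (((m.factorial:ℂ))⁻¹ * m) • X ^ m) N,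
        Finset.sum_range_succ' (fun m => (((m.factorial:ℂ))⁻¹ * m) • X ^ m) N]
    simp only [Nat.cast_zero, mul_zero, zero_smul, add_zero]
    rw [Finset.sum_range_succ (fun i => X * ((i.factorial:ℂ))⁻¹ • X ^ i) N]
    have hz2 : X * ((N.factorial:ℂ))⁻¹ • X ^ N = 0 := by rw [hN]; simp
    rw [hz2, add_zero]
    refine Finset.sum_congr rfl fun p _ => ?_
    rw [mul_smul_comm, ← pow_succ']
    congr 1
    push_cast
    exact fact_coeff p

/- ### Weil element commutation -/

section
variable (E F X Y H : Module.End ℂ V)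
    (e1 : E * X = X * E)
    (e2 : E * H = H * E - (2:ℂ) • (X * E))
    (e3 : E * Y = Y * E + E * H + X * E)
    (f1 : F * Y = Y * F)
    (f2 : F * H = H * F - (2:ℂ) • (Y * F))
    (f3 : F * X = X * F + F * H + Y * F)

include e1 e2 e3 f1 f2 f3 in
lemma weil_X : (E * F * E) * X = -(Y * (E * F * E)) := by
  have r1t : ∀ t : Module.End ℂ V, E*(X*t) = X*(E*t) := fun t => by
    rw [← mul_assoc, e1, mul_assoc]
  have r2t : ∀ t : Module.End ℂ V, E*(H*t) = H*(E*t) - (2:ℂ)•(X*(E*t)) := fun t => by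
    rw [← mul_assoc, e2, sub_mul, smul_mul_assoc, mul_assoc, mul_assoc]
  have r3t : ∀ t : Module.End ℂ V, E*(Y*t) = Y*(E*t) + E*(H*t) + X*(E*t) := fun t => by
    rw [← mul_assoc, e3, add_mul, add_mul, mul_assoc, mul_assoc, mul_assoc]
  have s1t : ∀ t : Module.End ℂ V, F*(Y*t) = Y*(F*t) := fun t => by
    rw [← mul_assoc, f1, mul_assoc]
  have s2t : ∀ t : Module.End ℂ V, F*(H*t) = H*(F*t) - (2:ℂ)•(Y*(F*t)) := fun t => by
    rw [← mul_assoc, f2, sub_mul, smul_mul_assoc, mul_assoc, mul_assoc]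
  have s3t : ∀ t : Module.End ℂ V, F*(X*t) = X*(F*t) + F*(H*t) + Y*(F*t) := fun t => by
    rw [← mul_assoc, f3, add_mul, add_mul, mul_assoc, mul_assoc, mul_assoc]
  simp only [mul_assoc, e1, e2, e3, f1, f2, f3, r1t, r2t, r3t, s1t, s2t, s3t,
    mul_add, mul_sub, mul_smul_comm, add_mul, sub_mul, smul_mul_assoc]
  module

include e1 e2 e3 f1 f2 f3 in
lemma weil_Y : (E * F * E) * Y
    = (E * F * E) * H + H * (E * F * E) - X * (E * F * E) := by
  have r1t : ∀ t : Module.End ℂ V, E*(X*t) = X*(E*t) := fun t => by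
    rw [← mul_assoc, e1, mul_assoc]
  have r2t : ∀ t : Module.End ℂ V, E*(H*t) = H*(E*t) - (2:ℂ)•(X*(E*t)) := fun t => by
    rw [← mul_assoc, e2, sub_mul, smul_mul_assoc, mul_assoc, mul_assoc]
  have r3t : ∀ t : Module.End ℂ V, E*(Y*t) = Y*(E*t) + E*(H*t) + X*(E*t) := fun t => by
    rw [← mul_assoc, e3, add_mul, add_mul, mul_assoc, mul_assoc, mul_assoc]
  have s1t : ∀ t : Module.End ℂ V, F*(Y*t) = Y*(F*t) := fun t => by
    rw [← mul_assoc, f1, mul_assoc]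
  have s2t : ∀ t : Module.End ℂ V, F*(H*t) = H*(F*t) - (2:ℂ)•(Y*(F*t)) := fun t => by
    rw [← mul_assoc, f2, sub_mul, smul_mul_assoc, mul_assoc, mul_assoc]
  have s3t : ∀ t : Module.End ℂ V, F*(X*t) = X*(F*t) + F*(H*t) + Y*(F*t) := fun t => by
    rw [← mul_assoc, f3, add_mul, add_mul, mul_assoc, mul_assoc, mul_assoc]
  simp only [mul_assoc, e1, e2, e3, f1, f2, f3, r1t, r2t, r3t, s1t, s2t, s3t,
    mul_add, mul_sub, mul_smul_comm, add_mul, sub_mul, smul_mul_assoc]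
  module
end

end Stmt2Aux


open Stmt2Aux

/-- Let `V` be a finite-dimensional complex representation of `sl₂(ℂ)` with
operators `X, Y, H` satisfying `[H,X] = 2X`, `[H,Y] = −2Y`, `[X,Y] = H` (acting nilpotently,
as is automatic in a finite-dimensional representation), and let
`w = exp(X)·exp(−Y)·exp(X)` be the Weil element.  If `v` is primitive of weight `−k`
(`Hv = −kv`, `Yv = 0`), then for `0 ≤ j ≤ k`:
`w((1/j!)·X^j v) = ((−1)^j/(k−j)!)·X^{k−j} v`. -/
theorem stmt2 {V : Type*} [AddCommGroup V] [Module ℂ V] [FiniteDimensional ℂ V]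
    (X Y H : Module.End ℂ V)
    (hHX : ⁅H, X⁆ = (2 : ℂ) • X) (hHY : ⁅H, Y⁆ = (-2 : ℂ) • Y) (hXY : ⁅X, Y⁆ = H)
    (hXnil : IsNilpotent X) (hYnil : IsNilpotent Y)
    (w : Module.End ℂ V)
    (hw : w = nilExp (finrank ℂ V) X * nilExp (finrank ℂ V) (-Y) * nilExp (finrank ℂ V) X)
    (k : ℕ) (v : V) (hHv : H v = (-(k : ℂ)) • v) (hYv : Y v = 0)
    (j : ℕ) (hj : j ≤ k) :
    w (((j.factorial : ℂ))⁻¹ • (X ^ j) v)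
      = ((-1 : ℂ) ^ j * (((k - j).factorial : ℂ))⁻¹) • (X ^ (k - j)) v := by
  classical
  by_cases hv : v = 0
  · subst hv
    simp
  rw [Ring.lie_def] at hHX hHY hXY
  have rHX : H * X = X * H + (2:ℂ) • X := by
    rw [sub_eq_iff_eq_add] at hHX
    rw [hHX]; abel
  have rHY : H * Y = Y * H - (2:ℂ) • Y := by
    rw [sub_eq_iff_eq_add] at hHY
    rw [hHY]; module
  have rXY : X * Y = Y * X + H := by
    rw [sub_eq_iff_eq_add] at hXY
    rw [hXY]; abel
  set N := finrank ℂ V with hNdef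
  have hXN : X ^ N = 0 := by
    have h1 := hXnil.charpoly_eq_X_pow_finrank
    have h2 := X.aeval_self_charpoly
    rw [h1] at h2
    simpa using h2
  have hYN : Y ^ N = 0 := by
    have h1 := hYnil.charpoly_eq_X_pow_finrank
    have h2 := Y.aeval_self_charpoly
    rw [h1] at h2
    simpa using h2
  have hXN1 : X ^ (N+1) = 0 := by rw [pow_succ, hXN, zero_mul]
  have hnegYN : (-Y) ^ N = 0 := by rw [neg_pow, hYN, mul_zero]
  have hnegYN1 : (-Y) ^ (N+1) = 0 := by rw [pow_succ, hnegYN, zero_mul]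
  -- vector relations
  have vH : ∀ m : ℕ, H ((X^m) v) = ((2*(m:ℂ)) - k) • (X^m) v := by
    intro m
    have h := congrArg (fun T : Module.End ℂ V => T v) (comm_H_pow X H rHX m)
    simp only [Module.End.mul_apply, LinearMap.add_apply, LinearMap.smul_apply] at h
    rw [hHv, map_smul] at h
    rw [h]
    module
  have vY : ∀ m : ℕ, Y ((X^(m+1)) v) = (((m:ℂ)+1) * ((k:ℂ) - m)) • (X^m) v := by
    intro m
    have h := congrArg (fun T : Module.End ℂ V => T v) (comm_pow_Y X Y H rHX rXY (m+1))
    simp only [Module.End.mul_apply, LinearMap.add_apply, LinearMap.smul_apply,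
      Nat.add_sub_cancel] at h
    rw [hYv, map_zero, hHv, map_smul] at h
    rw [add_assoc] at h
    have h3 := eq_neg_of_add_eq_zero_left h.symm
    rw [h3]
    push_cast
    match_scalars
    ring
  -- identify k as the largest exponent with nonzero image
  have hNpos : 0 < N := by
    have : Nontrivial V := ⟨⟨v, 0, hv⟩⟩
    exact Module.finrank_pos
  have hex : ∃ m, (X^(m+1)) v = 0 := ⟨N, by rw [hXN1]; rfl⟩
  have hn1 : (X^(Nat.find hex + 1)) v = 0 := Nat.find_spec hex
  have hn2 : (X^(Nat.find hex)) v ≠ 0 := by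
    rcases Nat.eq_zero_or_pos (Nat.find hex) with h0 | h0
    · rw [h0, pow_zero]
      simpa using hv
    · have hmin := Nat.find_min hex (show Nat.find hex - 1 < Nat.find hex by omega)
      have : Nat.find hex - 1 + 1 = Nat.find hex := by omega
      rwa [this] at hmin
  have hkeq : k = Nat.find hex := by
    have h := vY (Nat.find hex)
    rw [hn1, map_zero] at h
    have h2 := (smul_eq_zero.mp h.symm).resolve_right hn2
    rcases mul_eq_zero.mp h2 with h' | h'
    · exact absurd h' (Nat.cast_add_one_ne_zero _)
    · have : (k:ℂ) = (Nat.find hex : ℂ) := by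
        have := sub_eq_zero.mp h'
        exact_mod_cast this
      exact_mod_cast this
  have hkv : (X^(k+1)) v = 0 := by rw [hkeq]; exact hn1
  have hkzero : ∀ m, k+1 ≤ m → (X^m) v = 0 := by
    intro m hm
    have hsplit : X^m = X^(m-(k+1)) * X^(k+1) := by
      rw [← pow_add]; congr 1; omega
    rw [hsplit, Module.End.mul_apply, hkv, map_zero]
  have hkN : k < N := by
    by_contra hcon
    push_neg at hcon
    apply hn2
    rw [← hkeq]
    have hsplit : X^k = X^(k-N) * X^N := by
      rw [← pow_add]; congr 1; omega
    rw [hsplit, hXN, mul_zero]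
    rfl
  -- operator identities
  have e1 := nilExp_mul_X N X
  have e2 := nilExp_mul_H N X H rHX hXN1
  have e3 := nilExp_mul_Y N X Y H rHX rXY hXN
  have rHX' : (-H) * (-Y) = (-Y) * (-H) + (2:ℂ) • (-Y) := by
    rw [neg_mul_neg, neg_mul_neg, rHY]; module
  have rXY' : (-Y) * (-X) = (-X) * (-Y) + (-H) := by
    rw [neg_mul_neg, neg_mul_neg, rXY]; abel
  have f1 : nilExp N (-Y) * Y = Y * nilExp N (-Y) := by
    have h := nilExp_mul_X N (-Y)
    rw [mul_neg, neg_mul] at h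
    exact neg_injective h
  have f2 : nilExp N (-Y) * H = H * nilExp N (-Y) - (2:ℂ) • (Y * nilExp N (-Y)) := by
    have h := nilExp_mul_H N (-Y) (-H) rHX' hnegYN1
    rw [mul_neg, neg_mul, neg_mul] at h
    have h2 := congrArg Neg.neg h
    rw [neg_neg] at h2
    rw [h2]; module
  have f3 : nilExp N (-Y) * X = X * nilExp N (-Y) + nilExp N (-Y) * H + Y * nilExp N (-Y) := by
    have h := nilExp_mul_Y N (-Y) (-X) (-H) rHX' rXY' hnegYN
    rw [mul_neg, neg_mul, mul_neg, neg_mul] at h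
    have h2 := congrArg Neg.neg h
    rw [neg_neg] at h2
    rw [h2, f2]; module
  have W2 : w * Y = w * H + H * w - X * w := by
    rw [hw]; exact weil_Y _ _ X Y H e1 e2 e3 f1 f2 f3
  -- action of the exponentials on the chain vectors
  have bE : ∀ p : ℕ, nilExp N X ((X^p) v)
      = ∑ m ∈ Finset.range (N+1), ((m.factorial:ℂ))⁻¹ • (X^(p+m)) v := by
    intro p
    rw [nilExp_apply]
    refine Finset.sum_congr rfl fun m _ => ?_
    congr 1
    rw [← Module.End.mul_apply, ← pow_add, Nat.add_comm m p]
  have bEk : nilExp N X ((X^k) v) = (X^k) v := by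
    rw [bE k, Finset.sum_eq_single 0]
    · simp
    · intro m _ hm0
      rw [hkzero (k+m) (by omega), smul_zero]
    · intro h0
      exact absurd (Finset.mem_range.mpr (by omega)) h0
  have bY : ∀ q : ℕ, (Y^q) ((X^k) v)
      = ((k.descFactorial q * q.factorial : ℕ) : ℂ) • (X^(k-q)) v := by
    intro q
    induction q with
    | zero => simp
    | succ q ih =>
      rw [pow_succ', Module.End.mul_apply, ih, map_smul]
      by_cases hq : q < k
      · have hkq : k - q = (k - (q+1)) + 1 := by omega
        rw [hkq, vY (k - (q+1)), smul_smul]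
        congr 1
        have c1 : ((k - (q+1) : ℕ) : ℂ) = (k:ℂ) - (q+1) := by
          push_cast [Nat.cast_sub (by omega : q+1 ≤ k)]
          ring
        rw [c1, Nat.descFactorial_succ, Nat.factorial_succ]
        have c2 : ((k - q : ℕ) : ℂ) = (k:ℂ) - q := by
          push_cast [Nat.cast_sub (by omega : q ≤ k)]
          ring
        push_cast [c2]
        ring
      · have h1 : k - q = 0 := by omega
        have h2 : k - (q+1) = 0 := by omega
        have h3 : k.descFactorial (q+1) = 0 :=
          Nat.descFactorial_eq_zero_iff_lt.2 (by omega)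
        rw [h1, h2, h3, pow_zero]
        simp [hYv]
  have bF : nilExp N (-Y) ((X^k) v)
      = ∑ q ∈ Finset.range (N+1), (((-1:ℂ))^q * (k.descFactorial q : ℂ)) • (X^(k-q)) v := by
    rw [nilExp_apply]
    refine Finset.sum_congr rfl fun q _ => ?_
    have hnp : (-Y)^q = ((-1:ℂ)^q) • (Y^q) := by
      rw [show -Y = (-1:ℂ) • Y from (neg_one_smul ℂ Y).symm, smul_pow]
    rw [hnp, LinearMap.smul_apply, bY q, smul_smul, smul_smul]
    congr 1
    have hqf : (q.factorial : ℂ) ≠ 0 := Nat.cast_ne_zero.2 q.factorial_ne_zero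
    push_cast
    field_simp
  -- the base case j = k
  have hNk1 : k + 1 ≤ N + 1 := by omega
  have tk : w ((X^k) v) = (((-1:ℂ))^k * (k.factorial:ℂ)) • v := by
    have h1 : w ((X^k) v) = ∑ n ∈ Finset.range (N+1),
        (((-1:ℂ))^n * (k.descFactorial n : ℂ)) •
        (∑ m ∈ Finset.range (N+1), ((m.factorial:ℂ))⁻¹ • (X^(k-n+m)) v) := by
      rw [hw, Module.End.mul_apply, Module.End.mul_apply, bEk, bF, map_sum]
      refine Finset.sum_congr rfl fun n _ => ?_
      rw [map_smul, bE (k-n)]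
    rw [h1]
    have h2 : ∑ n ∈ Finset.range (N+1), (((-1:ℂ))^n * (k.descFactorial n : ℂ)) •
        (∑ m ∈ Finset.range (N+1), ((m.factorial:ℂ))⁻¹ • (X^(k-n+m)) v)
        = ∑ n ∈ Finset.range (k+1), (((-1:ℂ))^n * (k.descFactorial n : ℂ)) •
        (∑ m ∈ Finset.range (N+1), ((m.factorial:ℂ))⁻¹ • (X^(k-n+m)) v) := by
      refine (Finset.sum_subset (Finset.range_subset_range.mpr hNk1) ?_).symm
      intro n hn hn'
      have hlt : k < n := by
        simp only [Finset.mem_range] at hn hn'; omega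
      rw [Nat.descFactorial_eq_zero_iff_lt.2 hlt]
      simp
    rw [h2]
    have h3 : ∀ n ∈ Finset.range (k+1), (((-1:ℂ))^n * (k.descFactorial n : ℂ)) •
        (∑ m ∈ Finset.range (N+1), ((m.factorial:ℂ))⁻¹ • (X^(k-n+m)) v)
        = ∑ i ∈ Finset.range (k+1),
          (if i ≤ n then ((-1:ℂ))^n * (k.descFactorial n : ℂ) * (((n-i).factorial:ℂ))⁻¹
           else 0) • (X^(k-i)) v := by
      intro n hn
      have hn' : n ≤ k := by
        have := Finset.mem_range.mp hn; omega
      have s1 : ∑ m ∈ Finset.range (N+1), ((m.factorial:ℂ))⁻¹ • (X^(k-n+m)) v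
          = ∑ m ∈ Finset.range (n+1), ((m.factorial:ℂ))⁻¹ • (X^(k-n+m)) v := by
        refine (Finset.sum_subset (Finset.range_subset_range.mpr (by omega)) ?_).symm
        intro m hm hm'
        have hc : k + 1 ≤ k - n + m := by
          simp only [Finset.mem_range] at hm hm'; omega
        rw [hkzero _ hc, smul_zero]
      rw [s1,
        ← Finset.sum_range_reflect (fun m => ((m.factorial:ℂ))⁻¹ • (X^(k-n+m)) v) (n+1),
        Finset.smul_sum]
      have s2 : ∀ i ∈ Finset.range (n+1),
          (((-1:ℂ))^n * (k.descFactorial n : ℂ)) •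
            ((((n+1-1-i).factorial:ℂ))⁻¹ • (X^(k-n+(n+1-1-i))) v)
          = (if i ≤ n then ((-1:ℂ))^n * (k.descFactorial n : ℂ) * (((n-i).factorial:ℂ))⁻¹
             else 0) • (X^(k-i)) v := by
        intro i hi
        have hi' : i ≤ n := by
          have := Finset.mem_range.mp hi; omega
        rw [if_pos hi']
        have q1 : n+1-1-i = n - i := by omega
        have q2 : k - n + (n - i) = k - i := by omega
        rw [q1, q2, smul_smul]
      rw [Finset.sum_congr rfl s2]
      refine Finset.sum_subset (Finset.range_subset_range.mpr (by omega)) ?_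
      intro i hi hi'
      have hni : ¬ (i ≤ n) := by
        simp only [Finset.mem_range] at hi hi'; omega
      rw [if_neg hni, zero_smul]
    rw [Finset.sum_congr rfl h3, Finset.sum_comm]
    have h4 : ∀ i ∈ Finset.range (k+1), (∑ n ∈ Finset.range (k+1),
        (if i ≤ n then ((-1:ℂ))^n * (k.descFactorial n : ℂ) * (((n-i).factorial:ℂ))⁻¹
         else 0) • (X^(k-i)) v)
        = (if i = k then (((-1:ℂ))^k * (k.factorial:ℂ)) else 0) • (X^(k-i)) v := by
      intro i hi
      rw [← Finset.sum_smul, coeff_id' k i (by have := Finset.mem_range.mp hi; omega)]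
    rw [Finset.sum_congr rfl h4, Finset.sum_eq_single k]
    · rw [if_pos rfl, Nat.sub_self, pow_zero]
      simp
    · intro i _ hik
      rw [if_neg hik, zero_smul]
    · intro hk'
      exact absurd (Finset.mem_range.mpr (by omega)) hk'
  -- downward induction
  have key : ∀ d jj, jj + d = k →
      w ((X^jj) v)
        = (((-1:ℂ))^jj * (jj.factorial:ℂ) * (((k-jj).factorial:ℂ))⁻¹) • (X^(k-jj)) v := by
    intro d
    induction d with
    | zero =>
      intro jj hjj
      have hjk : jj = k := by omega
      subst hjk
      rw [tk, Nat.sub_self, pow_zero]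
      simp
    | succ d ih =>
      intro jj hjj
      have hjk : jj < k := by omega
      have ihj := ih (jj+1) (by omega)
      have hW := congrArg (fun T : Module.End ℂ V => T ((X^(jj+1)) v)) W2
      simp only [Module.End.mul_apply, LinearMap.add_apply, LinearMap.sub_apply] at hW
      rw [vY jj, vH (jj+1), map_smul, map_smul, ihj, map_smul, map_smul,
        vH (k-(jj+1))] at hW
      have hXstep : X ((X^(k-(jj+1))) v) = (X^(k-jj)) v := by
        have hee : (k-(jj+1)) + 1 = k - jj := by omega
        rw [← Module.End.mul_apply, ← pow_succ', hee]
      rw [hXstep] at hW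
      have hc : (((jj:ℂ))+1) * ((k:ℂ) - jj) ≠ 0 := by
        refine mul_ne_zero (Nat.cast_add_one_ne_zero jj) ?_
        intro hz
        have : (k:ℂ) = jj := by linear_combination hz
        have : k = jj := by exact_mod_cast this
        omega
      have hT := congrArg (fun u : V => ((((jj:ℂ))+1) * ((k:ℂ) - jj))⁻¹ • u) hW
      simp only [smul_smul, inv_mul_cancel₀ hc, one_smul] at hT
      rw [hT]
      -- now a pure scalar computation
      have e₂ : ((k - jj : ℕ):ℂ) = (k:ℂ) - jj := Nat.cast_sub (by omega)
      have e₃ : ((k-(jj+1) : ℕ):ℂ) = (k:ℂ) - jj - 1 := by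
        rw [Nat.cast_sub (by omega)]
        push_cast
        ring
      have e₁ : ((k - jj).factorial : ℂ)
          = ((k:ℂ) - jj) * ((k - (jj+1)).factorial : ℂ) := by
        have h5 : k - jj = (k - (jj+1)) + 1 := by omega
        rw [h5, Nat.factorial_succ, Nat.cast_mul, Nat.cast_add, Nat.cast_one, e₃]
        ring
      have hfne : ∀ q : ℕ, ((q.factorial:ℂ)) ≠ 0 :=
        fun q => Nat.cast_ne_zero.2 q.factorial_ne_zero
      have hkj1 : ((k:ℂ) - jj) ≠ 0 := by
        intro hz
        have : (k:ℂ) = jj := by linear_combination hz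
        have : k = jj := by exact_mod_cast this
        omega
      have e₄ : (((jj+1).factorial : ℕ) : ℂ) = ((jj:ℂ)+1) * (jj.factorial:ℂ) := by
        rw [Nat.factorial_succ, Nat.cast_mul, Nat.cast_add, Nat.cast_one]
      have hj1 : ((jj:ℂ)+1) ≠ 0 := Nat.cast_add_one_ne_zero jj
      have hfkj : ((k - (jj+1)).factorial : ℂ) ≠ 0 := hfne _
      match_scalars
      · -- coefficient of X^(k-(jj+1)) v : must vanish
        rw [e₃]
        push_cast
        ring
      · -- coefficient of X^(k-jj) v
        rw [e₁, e₄]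
        push_cast
        field_simp
        ring
  -- conclusion
  have hkey := key (k - j) j (by omega)
  rw [map_smul, hkey, smul_smul]
  congr 1
  have hjf : (j.factorial : ℂ) ≠ 0 := Nat.cast_ne_zero.2 j.factorial_ne_zero
  field_simp
end

section
/- Let g be a Lie algebra, let X be an element of g such that ad X acts semisimply with integer weights on a graded collection of operators, and suppose ω = ω₂ + ω₀ + ω₋₁ + ⋯ and σ = σ₁ + σ₀ + σ₋₁ + ⋯ are decompositions where ω_j and σ_j have weight j under ad ω₂, such that [ω, σ] = 0, (ad ω₂)^{j+1} ω_{−j} = 0 for all j ≥ 0, and X = ω₂ is part of an sl₂-triple. Then [ω₂, σ₁] = 0, and each σ_{−j} for j ≥ 0 satisfies (ad ω₂)^{j+1} σ_{−j} = 0 (i.e. all components σ_j with j ≤ 0 are primitive). -/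
/-- If `D = ad X`, `D^p a = 0` and `D^q b = 0`, then `D^k ⁅D^m a, D^n b⁆ = 0`
whenever `p + q ≤ m + n + k + 1`. -/
lemma aux_pow_lie {𝔤 : Type*} [LieRing 𝔤] [LieAlgebra ℂ 𝔤] (X a b : 𝔤)
    {p q : ℕ} (ha : ((LieAlgebra.ad ℂ 𝔤 X) ^ p) a = 0)
    (hb : ((LieAlgebra.ad ℂ 𝔤 X) ^ q) b = 0) :
    ∀ k m n : ℕ, p + q ≤ m + n + k + 1 →
      ((LieAlgebra.ad ℂ 𝔤 X) ^ k)
        ⁅((LieAlgebra.ad ℂ 𝔤 X) ^ m) a, ((LieAlgebra.ad ℂ 𝔤 X) ^ n) b⁆ = 0 := by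
  set E := LieAlgebra.ad ℂ 𝔤 X with hE
  intro k
  induction k with
  | zero =>
    intro m n hmn
    rcases le_or_gt p m with hm | hm
    · have hma : (E ^ m) a = 0 := by
        rw [← Nat.sub_add_cancel hm, pow_add, Module.End.mul_apply, ha, map_zero]
      rw [pow_zero, Module.End.one_apply, hma, zero_lie]
    · have hq : q ≤ n := by omega
      have hnb : (E ^ n) b = 0 := by
        rw [← Nat.sub_add_cancel hq, pow_add, Module.End.mul_apply, hb, map_zero]
      rw [pow_zero, Module.End.one_apply, hnb, lie_zero]
  | succ k IH =>
    intro m n hmn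
    have e1 : ⁅X, (E ^ m) a⁆ = (E ^ (m + 1)) a := by
      rw [pow_succ', Module.End.mul_apply, hE, LieAlgebra.ad_apply]
    have e2 : ⁅X, (E ^ n) b⁆ = (E ^ (n + 1)) b := by
      rw [pow_succ', Module.End.mul_apply, hE, LieAlgebra.ad_apply]
    rw [pow_succ, Module.End.mul_apply, hE, LieAlgebra.ad_apply, leibniz_lie, map_add,
      e1, e2, IH (m + 1) n (by omega), IH m (n + 1) (by omega), add_zero]

/-- Let `𝔤` be a Lie algebra with an `sl₂`-triple whose raising operator is
`ω₂ = w 2`.  Suppose `ω = ∑_j ω_j` (with `ω_j = 0` for `j > 2` and `j = 1`) and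
`σ = ∑_j σ_j` (with `σ_j = 0` for `j > 1`) are finite decompositions into `ad H`-weight
components, `[ω, σ] = 0` (degree by degree), and each `ω_{−j}` (`j ≥ 0`) is primitive, i.e.
`(ad ω₂)^{j+1} ω_{−j} = 0`.  Then `[ω₂, σ₁] = 0` and every component `σ_{−j}` with `j ≥ 0`
is primitive: `(ad ω₂)^{j+1} σ_{−j} = 0`. -/
theorem stmt3 {𝔤 : Type*} [LieRing 𝔤] [LieAlgebra ℂ 𝔤]
    (w s : ℤ → 𝔤) (Y H : 𝔤) (N : ℤ)
    -- support of the decompositions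
    (hw_top : ∀ j : ℤ, 2 < j → w j = 0) (hw_one : w 1 = 0)
    (hs_top : ∀ j : ℤ, 1 < j → s j = 0)
    (hw_bot : ∀ j : ℤ, j < N → w j = 0) (hs_bot : ∀ j : ℤ, j < N → s j = 0)
    -- `(w 2, Y, H)` is an `sl₂`-triple
    (hHX : ⁅H, w 2⁆ = (2 : ℤ) • w 2) (hHY : ⁅H, Y⁆ = (-2 : ℤ) • Y) (hXY : ⁅w 2, Y⁆ = H)
    -- the components have pure `ad H`-weight
    (hwt_w : ∀ j : ℤ, ⁅H, w j⁆ = j • w j) (hwt_s : ∀ j : ℤ, ⁅H, s j⁆ = j • s j)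
    -- the components `ω_{−j}`, `j ≥ 0`, are primitive
    (hprim : ∀ j : ℕ, ((LieAlgebra.ad ℂ 𝔤 (w 2)) ^ (j + 1)) (w (-(j : ℤ))) = 0)
    -- `[ω, σ] = 0`, expanded degree by degree
    (hcomm : ∀ m : ℤ, ∑ j ∈ Finset.Icc N 2, ⁅w j, s (m - j)⁆ = 0) :
    ⁅w 2, s 1⁆ = 0 ∧
      ∀ j : ℕ, ((LieAlgebra.ad ℂ 𝔤 (w 2)) ^ (j + 1)) (s (-(j : ℤ))) = 0 := by
  classical
  set E := LieAlgebra.ad ℂ 𝔤 (w 2) with hE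
  -- First part: `[ω₂, σ₁] = 0`, from the degree-3 component of `[ω, σ] = 0`.
  have h1 : ⁅w 2, s 1⁆ = 0 := by
    rcases le_or_gt N 2 with hN | hN
    · have h := hcomm 3
      rw [Finset.sum_eq_single_of_mem 2 (Finset.mem_Icc.mpr ⟨hN, le_refl 2⟩)
        (fun j hj hne => by
          rw [hs_top (3 - j) (by
            have := (Finset.mem_Icc.mp hj).2
            omega), lie_zero])] at h
      norm_num at h
      exact h
    · rw [hw_bot 2 hN, zero_lie]
  refine ⟨h1, ?_⟩
  intro k
  induction k using Nat.strong_induction_on with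
  | _ k IH =>
  rcases le_or_gt N 2 with hN | hN
  · -- apply `E ^ k` to the degree `2 - k` component of `[ω, σ] = 0`
    have h2 : ∑ j ∈ Finset.Icc N 2, (E ^ k) ⁅w j, s (2 - (k : ℤ) - j)⁆ = 0 := by
      rw [← map_sum, hcomm (2 - (k : ℤ)), map_zero]
    rw [Finset.sum_eq_single_of_mem 2 (Finset.mem_Icc.mpr ⟨hN, le_refl 2⟩)
      (fun j hj hne => by
        have hj2 : j ≤ 2 := (Finset.mem_Icc.mp hj).2
        rcases eq_or_lt_of_le hj2 with h | h
        · exact absurd h hne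
        have hj1 : j ≤ 1 := by omega
        rcases eq_or_lt_of_le hj1 with h' | h'
        · rw [h', hw_one, zero_lie, map_zero]
        have hj0 : j ≤ 0 := by omega
        -- now `j ≤ 0`; let `t = 2 - k - j`
        set t : ℤ := 2 - (k : ℤ) - j with ht
        rcases lt_or_ge 1 t with htt | htt
        · rw [hs_top t htt, lie_zero, map_zero]
        -- primitivity of `w j`
        have hwj : (E ^ ((-j).toNat + 1)) (w j) = 0 := by
          have := hprim (-j).toNat
          rwa [show -(((-j).toNat : ℤ)) = j by omega] at this
        -- primitivity of `s t`
        rcases le_or_gt t 0 with ht0 | ht0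
        · -- `t ≤ 0` : use the induction hypothesis
          have hst : (E ^ ((-t).toNat + 1)) (s t) = 0 := by
            have := IH (-t).toNat (by omega)
            rwa [show -(((-t).toNat : ℤ)) = t by omega] at this
          have := aux_pow_lie (w 2) (w j) (s t) hwj hst k 0 0 (by omega)
          simpa using this
        · -- `t = 1` : use `h1`
          have ht1 : t = 1 := by omega
          have hst : (E ^ 1) (s t) = 0 := by
            rw [pow_one, ht1, hE, LieAlgebra.ad_apply, h1]
          have := aux_pow_lie (w 2) (w j) (s t) hwj hst k 0 0 (by omega)
          simpa using this)] at h2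
    have : (2 : ℤ) - (k : ℤ) - 2 = -(k : ℤ) := by ring
    rw [this] at h2
    rw [pow_succ, Module.End.mul_apply]
    rwa [show E (s (-(k : ℤ))) = ⁅w 2, s (-(k : ℤ))⁆ from LieAlgebra.ad_apply ..]
  · -- `N > 2` : then `w 2 = 0` and `E = 0`
    have hw2 : w 2 = 0 := hw_bot 2 hN
    have hE0 : E = 0 := by
      ext x
      rw [hE, hw2, LieAlgebra.ad_apply, zero_lie, LinearMap.zero_apply]
    rw [hE0, zero_pow (Nat.succ_ne_zero k), LinearMap.zero_apply]
end

section
/- In the Lie algebra sl₂(ℂ) with standard triple (X, Y, H), if ξ is an element of a representation-carrying Lie algebra of operators with [H, ξ] = −ξ and (ad X)²(ξ) = 0 (ξ is primitive of weight −1), then Ad(w)(ξ) = [X, ξ], where w = exp(ad X)·exp(−ad Y)·exp(ad X) is the adjoint action of the Weil element. -/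
open Module

lemma nilExp_apply {V : Type*} [AddCommGroup V] [Module ℂ V]
    (N : ℕ) (A : Module.End ℂ V) (v : V) :
    nilExp N A v = ∑ m ∈ Finset.range (N + 1), ((m.factorial : ℂ))⁻¹ • (A ^ m) v := by
  simp [nilExp, LinearMap.sum_apply]

lemma nilExp_apply_of_zero {V : Type*} [AddCommGroup V] [Module ℂ V]
    (N : ℕ) (A : Module.End ℂ V) (v : V) (h : A v = 0) :
    nilExp N A v = v := by
  rw [nilExp_apply, Finset.sum_eq_single 0]
  · simp
  · intro m _ hm
    obtain ⟨k, rfl⟩ : ∃ k, m = k + 1 := ⟨m - 1, by omega⟩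
    rw [pow_succ, Module.End.mul_apply, h, map_zero, smul_zero]
  · intro h0; exact absurd (Finset.mem_range.2 (Nat.succ_pos N)) h0

lemma nilExp_apply_of_sq_zero {V : Type*} [AddCommGroup V] [Module ℂ V]
    (N : ℕ) (A : Module.End ℂ V) (v : V) (h : A (A v) = 0) (hN : 1 ≤ N) :
    nilExp N A v = v + A v := by
  rw [nilExp_apply, ← Finset.sum_subset (Finset.range_subset_range.2 (by omega : 2 ≤ N + 1))]
  · simp [Finset.sum_range_succ]
  · intro m _ hm
    obtain ⟨k, rfl⟩ : ∃ k, m = k + 2 := ⟨m - 2, by simp only [Finset.mem_range] at hm; omega⟩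
    rw [pow_add, Module.End.mul_apply, pow_two, Module.End.mul_apply, h, map_zero, smul_zero]


/-- Let `L` be a Lie algebra containing an `sl₂`-triple `(X, Y, H)` with
`ad X` and `ad Y` nilpotent, and let `Ad(w) = exp(ad X) ∘ exp(−ad Y) ∘ exp(ad X)` be the
adjoint action of the Weil element.  If `ξ` is primitive of weight `−1`, i.e. `[H, ξ] = −ξ`
and `(ad X)²(ξ) = 0`, then `Ad(w)(ξ) = [X, ξ]`. -/
theorem stmt4 {L : Type*} [LieRing L] [LieAlgebra ℂ L] [FiniteDimensional ℂ L]
    (X Y H ξ : L)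
    (hHX : ⁅H, X⁆ = (2 : ℤ) • X) (hHY : ⁅H, Y⁆ = (-2 : ℤ) • Y) (hXY : ⁅X, Y⁆ = H)
    (hXnil : IsNilpotent ((LieAlgebra.ad ℂ L X : Module.End ℂ L)))
    (hYnil : IsNilpotent ((LieAlgebra.ad ℂ L Y : Module.End ℂ L)))
    (hξH : ⁅H, ξ⁆ = -ξ) (hξprim : ⁅X, ⁅X, ξ⁆⁆ = 0) :
    (nilExp (finrank ℂ L) (LieAlgebra.ad ℂ L X) *
        nilExp (finrank ℂ L) (-(LieAlgebra.ad ℂ L Y)) *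
        nilExp (finrank ℂ L) (LieAlgebra.ad ℂ L X)) ξ = ⁅X, ξ⁆ := by
  by_cases hξ0 : ξ = 0
  · simp [hξ0]
  have hH0 : H ≠ 0 := by
    intro h
    rw [h, zero_lie] at hξH
    exact hξ0 (by rw [← neg_neg ξ, ← hξH, neg_zero])
  have t : IsSl2Triple H X Y :=
    { h_ne_zero := hH0
      lie_e_f := hXY
      lie_h_e_nsmul := by rw [hHX]; exact (two_smul ℤ X).trans (two_smul ℕ X).symm
      lie_h_f_nsmul := by
        rw [hHY, show ((-2 : ℤ)) = -(2 : ℤ) from rfl, neg_smul]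
        exact congrArg Neg.neg ((two_smul ℤ Y).trans (two_smul ℕ Y).symm) }
  -- any vector of weight -1 killed by ad X is zero
  have key : ∀ v : L, ⁅H, v⁆ = -v → ⁅X, v⁆ = 0 → v = 0 := by
    intro v hv1 hv2
    by_contra hv0
    have P : t.HasPrimitiveVectorWith v (-1 : ℂ) :=
      ⟨hv0, by rw [hv1, neg_smul, one_smul], hv2⟩
    obtain ⟨n, hn⟩ := P.exists_nat
    have h' : (-1 : ℤ) = (n : ℤ) := by exact_mod_cast hn
    omega
  set η := ⁅X, ξ⁆ with hη
  have hHη : ⁅H, η⁆ = η := by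
    rw [hη, leibniz_lie, hHX, hξH, smul_lie, lie_neg, two_smul]
    abel
  have ηne : η ≠ 0 := fun h => hξ0 (key ξ hξH h)
  have Pη : t.HasPrimitiveVectorWith η (1 : ℂ) :=
    ⟨ηne, by rw [hHη, one_smul], hξprim⟩
  have hff := Pη.pow_toEnd_f_eq_zero_of_eq_nat (n := 1) (by norm_num)
  have hYYη : ⁅Y, ⁅Y, η⁆⁆ = 0 := by
    rwa [pow_succ, pow_one, Module.End.mul_apply, LieModule.toEnd_apply_apply,
      LieModule.toEnd_apply_apply] at hff
  have hXη : ⁅X, η⁆ = 0 := hξprim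
  have hXYη : ⁅X, ⁅Y, η⁆⁆ = η := by
    rw [leibniz_lie, hXY, hHη, hXη, lie_zero, add_zero]
  have hHYη : ⁅H, ⁅Y, η⁆⁆ = -⁅Y, η⁆ := by
    rw [leibniz_lie, hHY, hHη, smul_lie, neg_smul, two_smul]
    abel
  have hv : ⁅Y, η⁆ - ξ = 0 := by
    refine key _ ?_ ?_
    · rw [lie_sub, hHYη, hξH]; abel
    · rw [lie_sub, hXYη, ← hη, sub_self]
  have hYη : ⁅Y, η⁆ = ξ := sub_eq_zero.1 hv
  have hYξ : ⁅Y, ξ⁆ = 0 := by rw [← hYη, hYYη]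
  have : Nontrivial L := ⟨⟨ξ, 0, hξ0⟩⟩
  have hN : 1 ≤ finrank ℂ L := Module.finrank_pos
  rw [Module.End.mul_apply, Module.End.mul_apply]
  rw [nilExp_apply_of_sq_zero _ _ ξ (by simpa using hξprim) hN]
  rw [map_add]
  rw [nilExp_apply_of_zero _ _ ξ (by simp [hYξ])]
  rw [nilExp_apply_of_sq_zero _ (-(LieAlgebra.ad ℂ L Y)) (LieAlgebra.ad ℂ L X ξ)
    (by simp only [LinearMap.neg_apply, LieAlgebra.ad_apply, lie_neg, ← hη, hYη, hYξ, neg_zero,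
      neg_neg]) hN]
  have hvec : ξ + (LieAlgebra.ad ℂ L X ξ + (-(LieAlgebra.ad ℂ L Y)) (LieAlgebra.ad ℂ L X ξ)) = η := by
    simp only [LinearMap.neg_apply, LieAlgebra.ad_apply, ← hη, hYη]
    abel
  rw [hvec, nilExp_apply_of_zero _ _ η (by simpa using hXη)]
end

section
/- Let L be a Lie algebra containing sl₂-triples (X₁, Y₁, H₁) and (X₂, Y₂, H₂) such that [X₁, X₂] = 0, [Y₁, Y₂] = 0, [H₂, Y₁] = −Y₁, [H₁, X₂] = X₂, (ad Y₁)² X₂ = 0, and (ad X₂)² Y₁ = 0, and such that the Weil elements w₁, w₂ (acting via Ad(w_i) = exp(ad X_i) exp(−ad Y_i) exp(ad X_i)) are defined. Then (Ad w₁ ∘ Ad w₂ ∘ Ad w₁)(X₁) = X₂. -/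
open Module

/-- The adjoint Weil element `Ad(w) = exp(ad X) ∘ exp(−ad Y) ∘ exp(ad X)` of an `sl₂`-pair
`(X, Y)` acting on a Lie algebra `L`. -/
noncomputable def adWeil {L : Type*} [LieRing L] [LieAlgebra ℂ L] [FiniteDimensional ℂ L]
    (X Y : L) : Module.End ℂ L :=
  nilExp (finrank ℂ L) (LieAlgebra.ad ℂ L X) *
    nilExp (finrank ℂ L) (-(LieAlgebra.ad ℂ L Y)) *
    nilExp (finrank ℂ L) (LieAlgebra.ad ℂ L X)

lemma nilExp_apply_eq {V : Type*} [AddCommGroup V] [Module ℂ V]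
    (N k : ℕ) (X : Module.End ℂ V) (v : V) (hk : k ≤ N + 1)
    (h : (X ^ k) v = 0) :
    nilExp N X v = ∑ m ∈ Finset.range k, ((m.factorial : ℂ))⁻¹ • (X ^ m) v := by
  have hzero : ∀ m, k ≤ m → (X ^ m) v = 0 := by
    intro m hm
    obtain ⟨j, rfl⟩ := Nat.exists_eq_add_of_le hm
    rw [add_comm, pow_add, Module.End.mul_apply, h, map_zero]
  unfold nilExp
  rw [LinearMap.sum_apply]
  simp only [LinearMap.smul_apply]
  refine (Finset.sum_subset (Finset.range_subset_range.2 hk) ?_).symm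
  intro m _ hnot
  rw [hzero m (by simpa using hnot), smul_zero]

lemma nilExp_one {V : Type*} [AddCommGroup V] [Module ℂ V]
    (N : ℕ) (X : Module.End ℂ V) (v : V) (h : X v = 0) :
    nilExp N X v = v := by
  rw [nilExp_apply_eq N 1 X v (by omega) (by simpa using h)]
  simp

lemma nilExp_two {V : Type*} [AddCommGroup V] [Module ℂ V]
    (N : ℕ) (X : Module.End ℂ V) (v : V) (hN : 1 ≤ N) (h : X (X v) = 0) :
    nilExp N X v = v + X v := by
  rw [nilExp_apply_eq N 2 X v (by omega) (by simpa [pow_succ, Module.End.mul_apply] using h)]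
  simp [Finset.sum_range_succ, pow_succ, Module.End.mul_apply]

lemma nilExp_three {V : Type*} [AddCommGroup V] [Module ℂ V]
    (N : ℕ) (X : Module.End ℂ V) (v : V) (hN : 2 ≤ N) (h : X (X (X v)) = 0) :
    nilExp N X v = v + X v + (2⁻¹ : ℂ) • X (X v) := by
  rw [nilExp_apply_eq N 3 X v (by omega) (by simpa [pow_succ, Module.End.mul_apply] using h)]
  norm_num [Finset.sum_range_succ, pow_succ, Module.End.mul_apply]

/-- Let `L` be a Lie algebra containing two `sl₂`-triples
`(X₁, Y₁, H₁)` and `(X₂, Y₂, H₂)` with `[X₁,X₂] = 0`, `[Y₁,Y₂] = 0`, `[H₂,Y₁] = −Y₁`,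
`[H₁,X₂] = X₂`, `(ad Y₁)² X₂ = 0` and `(ad X₂)² Y₁ = 0`, with nilpotent adjoint actions so
that the Weil elements `w₁, w₂` are defined.  Then `(Ad w₁ ∘ Ad w₂ ∘ Ad w₁)(X₁) = X₂`. -/
theorem stmt6 {L : Type*} [LieRing L] [LieAlgebra ℂ L] [FiniteDimensional ℂ L]
    (X₁ Y₁ H₁ X₂ Y₂ H₂ : L)
    (h1X : ⁅H₁, X₁⁆ = (2 : ℤ) • X₁) (h1Y : ⁅H₁, Y₁⁆ = (-2 : ℤ) • Y₁) (h1XY : ⁅X₁, Y₁⁆ = H₁)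
    (h2X : ⁅H₂, X₂⁆ = (2 : ℤ) • X₂) (h2Y : ⁅H₂, Y₂⁆ = (-2 : ℤ) • Y₂) (h2XY : ⁅X₂, Y₂⁆ = H₂)
    (hXX : ⁅X₁, X₂⁆ = 0) (hYY : ⁅Y₁, Y₂⁆ = 0)
    (hH2Y1 : ⁅H₂, Y₁⁆ = -Y₁) (hH1X2 : ⁅H₁, X₂⁆ = X₂)
    (hadY1 : ⁅Y₁, ⁅Y₁, X₂⁆⁆ = 0) (hadX2 : ⁅X₂, ⁅X₂, Y₁⁆⁆ = 0)
    (hn1 : IsNilpotent ((LieAlgebra.ad ℂ L X₁ : Module.End ℂ L)))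
    (hn2 : IsNilpotent ((LieAlgebra.ad ℂ L Y₁ : Module.End ℂ L)))
    (hn3 : IsNilpotent ((LieAlgebra.ad ℂ L X₂ : Module.End ℂ L)))
    (hn4 : IsNilpotent ((LieAlgebra.ad ℂ L Y₂ : Module.End ℂ L))) :
    adWeil X₁ Y₁ (adWeil X₂ Y₂ (adWeil X₁ Y₁ X₁)) = X₂ := by
  -- convert `ℤ`-scalars to `ℂ`-scalars
  have zc : ∀ (n : ℤ) (v : L), (n : ℤ) • v = ((n : ℂ)) • v := by
    intro n v; rw [← Int.cast_smul_eq_zsmul ℂ]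
  rw [zc] at h1X h1Y h2X h2Y
  push_cast at h1X h1Y h2X h2Y
  by_cases hH : H₁ = 0
  · -- degenerate case : everything relevant vanishes
    have hX1 : X₁ = 0 := by
      have h := h1X; rw [hH, zero_lie] at h
      rcases smul_eq_zero.mp h.symm with h' | h'
      · norm_num at h'
      · exact h'
    have hX2 : X₂ = 0 := by rw [← hH1X2, hH, zero_lie]
    rw [hX1, hX2]
    simp
  -- nondegenerate case: `X₁, Y₁` are linearly independent, so `finrank ≥ 2`
  have hX1ne : X₁ ≠ 0 := fun h => hH (by rw [← h1XY, h, zero_lie])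
  have hY1ne : Y₁ ≠ 0 := fun h => hH (by rw [← h1XY, h, lie_zero])
  have hli : LinearIndependent ℂ ![X₁, Y₁] := by
    rw [LinearIndependent.pair_iff]
    intro s t hst
    have h2 : (s * 2) • X₁ + (t * (-2)) • Y₁ = 0 := by
      have h' : s • ⁅H₁, X₁⁆ + t • ⁅H₁, Y₁⁆ = 0 := by
        rw [← lie_smul, ← lie_smul, ← lie_add, hst, lie_zero]
      rw [h1X, h1Y, smul_smul, smul_smul] at h'
      exact h'
    have e : ((4 : ℂ) * t) • Y₁ =
        (2 : ℂ) • (s • X₁ + t • Y₁) - ((s * 2) • X₁ + (t * (-2)) • Y₁) := by module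
    rw [hst, h2, smul_zero, sub_zero] at e
    have ht : t = 0 := by
      rcases smul_eq_zero.mp e with h' | h'
      · rcases mul_eq_zero.mp h' with h'' | h''
        · norm_num at h''
        · exact h''
      · exact absurd h' hY1ne
    have hs : s = 0 := by
      rw [ht, zero_smul, add_zero] at hst
      rcases smul_eq_zero.mp hst with h' | h'
      · exact h'
      · exact absurd h' hX1ne
    exact ⟨hs, ht⟩
  have hN : 2 ≤ finrank ℂ L := by simpa using hli.fintype_card_le_finrank
  set N := finrank ℂ L with hNdef
  -- bracket computations
  have c2 : ⁅X₁, H₁⁆ = -((2:ℂ) • X₁) := by rw [← lie_skew, h1X]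
  have c4 : ⁅Y₁, X₁⁆ = -H₁ := by rw [← lie_skew, h1XY]
  have c5 : ⁅Y₁, H₁⁆ = (2:ℂ) • Y₁ := by
    rw [← lie_skew, h1Y]; module
  have c8 : ⁅Y₂, Y₁⁆ = 0 := by rw [← lie_skew, hYY, neg_zero]
  have cYX : ⁅Y₂, X₂⁆ = -H₂ := by rw [← lie_skew, h2XY]
  have c9 : ⁅Y₂, ⁅X₂, Y₁⁆⁆ = Y₁ := by
    rw [leibniz_lie, c8, lie_zero, add_zero, cYX, neg_lie, hH2Y1, neg_neg]
  have c11 : ⁅X₁, ⁅Y₁, X₂⁆⁆ = X₂ := by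
    rw [leibniz_lie, h1XY, hXX, lie_zero, add_zero, hH1X2]
  have c14 : ⁅Y₁, X₂⁆ = -⁅X₂, Y₁⁆ := by rw [← lie_skew]
  have c13' : ⁅Y₁, ⁅X₂, Y₁⁆⁆ = 0 := by
    rw [← neg_eq_zero, ← lie_neg, ← c14, hadY1]
  -- Step A : adWeil X₁ Y₁ X₁ = -Y₁
  have s1 : nilExp N (LieAlgebra.ad ℂ L X₁) X₁ = X₁ :=
    nilExp_one _ _ _ (by simp [LieAlgebra.ad_apply])
  have s2 : nilExp N (-(LieAlgebra.ad ℂ L Y₁)) X₁ = X₁ + H₁ - Y₁ := by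
    rw [nilExp_three _ _ _ hN (by
      simp only [LinearMap.neg_apply, LieAlgebra.ad_apply, c4, neg_neg, c5, lie_neg,
        lie_smul, lie_self, smul_zero, neg_zero])]
    simp only [LinearMap.neg_apply, LieAlgebra.ad_apply, c4, neg_neg, c5]
    module
  have s3 : nilExp N (LieAlgebra.ad ℂ L X₁) (X₁ + H₁ - Y₁) = -Y₁ := by
    rw [nilExp_three _ _ _ hN (by
      simp only [LieAlgebra.ad_apply, lie_add, lie_sub, lie_self, c2, h1XY, lie_neg,
        lie_smul, lie_zero, lie_self, smul_zero, zero_add, zero_sub, neg_neg, sub_neg_eq_add,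
        add_zero, neg_zero, smul_neg])]
    simp only [LieAlgebra.ad_apply, lie_add, lie_sub, lie_self, c2, h1XY, lie_neg,
      lie_smul, lie_zero, lie_self, smul_zero, zero_add, zero_sub, neg_neg, sub_neg_eq_add,
      add_zero, neg_zero, smul_neg]
    module
  have keyA : adWeil X₁ Y₁ X₁ = -Y₁ := by
    unfold adWeil
    rw [Module.End.mul_apply, Module.End.mul_apply, s1, s2, s3]
  -- Step B : adWeil X₂ Y₂ Y₁ = ⁅X₂, Y₁⁆
  have t1 : nilExp N (LieAlgebra.ad ℂ L X₂) Y₁ = Y₁ + ⁅X₂, Y₁⁆ := by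
    rw [nilExp_two _ _ _ (by omega) (by simp [LieAlgebra.ad_apply, hadX2])]
    simp [LieAlgebra.ad_apply]
  have t2 : nilExp N (-(LieAlgebra.ad ℂ L Y₂)) (Y₁ + ⁅X₂, Y₁⁆) = ⁅X₂, Y₁⁆ := by
    rw [nilExp_two _ _ _ (by omega) (by
      simp only [LinearMap.neg_apply, LieAlgebra.ad_apply, lie_add, c8, c9, zero_add,
        neg_add_rev, lie_neg, neg_neg, neg_zero, add_zero])]
    simp only [LinearMap.neg_apply, LieAlgebra.ad_apply, lie_add, c8, c9, zero_add]
    abel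
  have t3 : nilExp N (LieAlgebra.ad ℂ L X₂) ⁅X₂, Y₁⁆ = ⁅X₂, Y₁⁆ :=
    nilExp_one _ _ _ (by simp [LieAlgebra.ad_apply, hadX2])
  have keyB : adWeil X₂ Y₂ Y₁ = ⁅X₂, Y₁⁆ := by
    unfold adWeil
    rw [Module.End.mul_apply, Module.End.mul_apply, t1, t2, t3]
  -- Step C : adWeil X₁ Y₁ ⁅Y₁, X₂⁆ = X₂
  have u1 : nilExp N (LieAlgebra.ad ℂ L X₁) ⁅Y₁, X₂⁆ = ⁅Y₁, X₂⁆ + X₂ := by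
    rw [nilExp_two _ _ _ (by omega) (by simp [LieAlgebra.ad_apply, c11, hXX])]
    simp [LieAlgebra.ad_apply, c11]
  have u2 : nilExp N (-(LieAlgebra.ad ℂ L Y₁)) (⁅Y₁, X₂⁆ + X₂) = X₂ := by
    rw [nilExp_two _ _ _ (by omega) (by
      simp only [LinearMap.neg_apply, LieAlgebra.ad_apply, lie_add, hadY1, zero_add,
        neg_add_rev, lie_neg, neg_neg, neg_zero, add_zero])]
    simp only [LinearMap.neg_apply, LieAlgebra.ad_apply, lie_add, hadY1, zero_add]
    abel
  have u3 : nilExp N (LieAlgebra.ad ℂ L X₁) X₂ = X₂ :=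
    nilExp_one _ _ _ (by simp [LieAlgebra.ad_apply, hXX])
  have keyC : adWeil X₁ Y₁ ⁅Y₁, X₂⁆ = X₂ := by
    unfold adWeil
    rw [Module.End.mul_apply, Module.End.mul_apply, u1, u2, u3]
  rw [keyA, map_neg, keyB, lie_skew, keyC]
end

section
/- Let V be a finite-dimensional complex vector space with exterior algebra ⋀V*, let σ ∈ ⋀²V* be a 2-form on V of rank 2n (σ^n ≠ 0, σ^{n+1} = 0 on the relevant graded piece — assume dim V = 2n and σ nondegenerate). Suppose ξ ∈ V and β ∈ V* satisfy β = ι_ξ σ (contraction of σ by ξ). If α ∈ ⋀^{n−k}V* is primitive (σ^{k+1} ∧ α = 0), and β ∧ α = γ₀ + σ ∧ γ₁ is the Lefschetz decomposition with γ₀ ∈ ⋀^{n−k+1}V*, γ₁ ∈ ⋀^{n−k−1}V* primitive, then ι_ξ α = −(k+1)γ₁. -/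
/-!
Contraction `ι_ξ` is an antiderivation, so applying it to `σ^{k+1} ∧ α = 0` gives
`(k+1) σ^k ∧ β ∧ α + σ^{k+1} ∧ ι_ξ α = 0` (even forms are central, and `ι_ξ σ = β`).
Inserting the decomposition `β ∧ α = γ₀ + σ ∧ γ₁` and `σ^k ∧ γ₀ = 0` turns this into
`σ^{k+1} ∧ ι_ξ α = σ^{k+1} ∧ (-(k+1) γ₁)`, and `σ^{k+1}` is injective in degree `n - k - 1`.
-/

open ExteriorAlgebra

/-- The `i`-th graded piece `⋀^i M` of the exterior algebra of `M`. -/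
noncomputable def extGrade (M : Type*) [AddCommGroup M] [Module ℂ M] (i : ℕ) :
    Submodule ℂ (ExteriorAlgebra ℂ M) :=
  (LinearMap.range (ExteriorAlgebra.ι ℂ : M →ₗ[ℂ] ExteriorAlgebra ℂ M)) ^ i

namespace ExteriorAlgebra

open CliffordAlgebra (contractLeft contractLeft_ι contractLeft_ι_mul)

variable {R M : Type*} [CommRing R] [AddCommGroup M] [Module R M]

theorem contractLeft_mem_exteriorPower (d : Module.Dual R M) {m : ℕ} {x : ExteriorAlgebra R M}
    (hx : x ∈ ⋀[R]^(m + 1) M) : contractLeft d x ∈ ⋀[R]^m M := by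
  induction m generalizing x with
  | zero =>
    rw [exteriorPower, pow_one] at hx
    obtain ⟨v, rfl⟩ := hx
    rw [contractLeft_ι, exteriorPower, pow_zero]
    exact Submodule.algebraMap_mem _
  | succ m ih =>
    rw [exteriorPower, pow_succ'] at hx
    induction hx using Submodule.mul_induction_on' with
    | mem_mul_mem a ha b hb =>
      obtain ⟨v, rfl⟩ := ha
      rw [contractLeft_ι_mul]
      refine sub_mem (Submodule.smul_mem _ _ hb) ?_
      rw [exteriorPower, pow_succ']
      exact Submodule.mul_mem_mul ⟨v, rfl⟩ (ih hb)
    | add a _ b _ iha ihb =>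
      rw [map_add]
      exact add_mem iha ihb

theorem contractLeft_mul_of_mem_exteriorPower (d : Module.Dual R M) {i : ℕ}
    {x : ExteriorAlgebra R M} (hx : x ∈ ⋀[R]^i M) (y : ExteriorAlgebra R M) :
    contractLeft d (x * y) = contractLeft d x * y + (-1 : R) ^ i • (x * contractLeft d y) := by
  induction i generalizing x with
  | zero =>
    rw [exteriorPower, pow_zero] at hx
    obtain ⟨r, rfl⟩ := Submodule.mem_one.mp hx
    simp [CliffordAlgebra.contractLeft_algebraMap_mul, Algebra.smul_def]
  | succ i ih =>
    rw [exteriorPower, pow_succ'] at hx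
    induction hx using Submodule.mul_induction_on' with
    | mem_mul_mem a ha b hb =>
      obtain ⟨v, rfl⟩ := ha
      rw [mul_assoc, contractLeft_ι_mul, contractLeft_ι_mul, ih hb, pow_succ]
      simp only [sub_mul, smul_mul_assoc, mul_add, mul_smul_comm, mul_assoc, mul_neg_one, neg_smul]
      abel
    | add a _ b _ iha ihb =>
      simp only [add_mul, map_add, iha, ihb, smul_add]
      abel

theorem commute_of_mem_exteriorPower_two {σ : ExteriorAlgebra R M} (hσ : σ ∈ ⋀[R]^2 M)
    (x : ExteriorAlgebra R M) : Commute σ x := by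
  have hι : ∀ u : M, Commute σ (ι R u) := by
    intro u
    rw [exteriorPower, pow_two] at hσ
    induction hσ using Submodule.mul_induction_on' with
    | mem_mul_mem a ha b hb =>
      obtain ⟨v, rfl⟩ := ha
      obtain ⟨w, rfl⟩ := hb
      have anticomm : ∀ x y : M, ι R x * ι R y = -(ι R y * ι R x) := fun x y =>
        eq_neg_of_add_eq_zero_left (ι_add_mul_swap x y)
      simp only [Commute, SemiconjBy, mul_assoc, anticomm w u]
      rw [mul_neg, ← mul_assoc, anticomm v u, neg_mul, neg_neg, mul_assoc]
    | add a _ b _ iha ihb => exact iha.add_left ihb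
  induction x using ExteriorAlgebra.induction with
  | algebraMap r => exact Algebra.commutes r σ |>.symm
  | ι u => exact hι u
  | mul a b ha hb => exact ha.mul_right hb
  | add a b ha hb => exact ha.add_right hb

section TwoForm

variable {σ : ExteriorAlgebra R M} (hσ : σ ∈ ⋀[R]^2 M) (d : Module.Dual R M)
include hσ

theorem contractLeft_pow_mul (m : ℕ) (y : ExteriorAlgebra R M) :
    contractLeft d (σ ^ m * y) = contractLeft d (σ ^ m) * y + σ ^ m * contractLeft d y := by
  have hσm : σ ^ m ∈ ⋀[R]^(2 * m) M := by
    rw [exteriorPower, pow_mul]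
    exact Submodule.pow_mem_pow _ hσ m
  rw [contractLeft_mul_of_mem_exteriorPower d hσm, (even_two_mul m).neg_one_pow, one_smul]

theorem contractLeft_pow_succ (m : ℕ) :
    contractLeft d (σ ^ (m + 1)) = ((m : R) + 1) • (σ ^ m * contractLeft d σ) := by
  induction m with
  | zero => simp
  | succ m ih =>
    rw [pow_succ σ (m + 1), contractLeft_pow_mul hσ d, ih, smul_mul_assoc, mul_assoc,
      ← (commute_of_mem_exteriorPower_two hσ (contractLeft d σ)).eq, ← mul_assoc, ← pow_succ,
      Nat.cast_succ, add_smul ((m : R) + 1) 1, one_smul]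

theorem pow_succ_mul_contractLeft_of_pow_succ_mul_eq_zero {k : ℕ} {α : ExteriorAlgebra R M}
    (hα : σ ^ (k + 1) * α = 0) :
    σ ^ (k + 1) * contractLeft d α = -((k : R) + 1) • (σ ^ k * (contractLeft d σ * α)) := by
  have h := congrArg (contractLeft d) hα
  rw [contractLeft_pow_mul hσ d, contractLeft_pow_succ hσ d, map_zero, smul_mul_assoc,
    mul_assoc] at h
  rw [neg_smul]
  exact eq_neg_of_add_eq_zero_right h

end TwoForm

end ExteriorAlgebra

theorem stmt8_general {M : Type*} [AddCommGroup M] [Module ℂ M]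
    (n k : ℕ) (hkn : k + 1 ≤ n)
    (ξ : Module.Dual ℂ M)
    (σ : ExteriorAlgebra ℂ M) (hσ : σ ∈ extGrade M 2)
    (hinj : ∀ x ∈ extGrade M (n - k - 1), ∀ y ∈ extGrade M (n - k - 1),
      σ ^ (k + 1) * x = σ ^ (k + 1) * y → x = y)
    (α : ExteriorAlgebra ℂ M) (hα : α ∈ extGrade M (n - k))
    (hαprim : σ ^ (k + 1) * α = 0)
    (γ₀ γ₁ : ExteriorAlgebra ℂ M)
    (hγ₀prim : σ ^ k * γ₀ = 0)
    (hγ₁ : γ₁ ∈ extGrade M (n - k - 1))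
    (hdec : CliffordAlgebra.contractLeft ξ σ * α = γ₀ + σ * γ₁) :
    CliffordAlgebra.contractLeft ξ α = (-((k : ℂ) + 1)) • γ₁ := by
  have hα' : α ∈ ⋀[ℂ]^(n - k - 1 + 1) M := by
    rwa [Nat.sub_add_cancel (by omega : 1 ≤ n - k)]
  refine hinj _ (contractLeft_mem_exteriorPower ξ hα') _ (Submodule.smul_mem _ _ hγ₁) ?_
  rw [pow_succ_mul_contractLeft_of_pow_succ_mul_eq_zero hσ ξ hαprim, hdec, mul_add, hγ₀prim,
    zero_add, ← mul_assoc, ← pow_succ, mul_smul_comm]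

/-- Work in the exterior algebra of a `2n`-dimensional space (we write `M`
for the space of `1`-forms, `ι_ξ` for contraction with `ξ`, realized by the dual element
`ξ ∈ Module.Dual ℂ M`).  Let `σ` be a nondegenerate `2`-form (nondegeneracy in the relevant
degree is expressed by the injectivity of `σ^{k+1}∧ : ⋀^{n−k−1} → ⋀^{n+k+1}`), let
`β = ι_ξ σ`, let `α ∈ ⋀^{n−k}` be primitive (`σ^{k+1} ∧ α = 0`), and let
`β ∧ α = γ₀ + σ ∧ γ₁` be the Lefschetz decomposition with `γ₀ ∈ ⋀^{n−k+1}`,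
`γ₁ ∈ ⋀^{n−k−1}` primitive.  Then `ι_ξ α = −(k+1)·γ₁`. -/
theorem stmt8 {M : Type*} [AddCommGroup M] [Module ℂ M]
    (n k : ℕ) (hkn : k + 1 ≤ n)
    (ξ : Module.Dual ℂ M)
    (σ : ExteriorAlgebra ℂ M) (hσ : σ ∈ extGrade M 2)
    (hinj : ∀ x ∈ extGrade M (n - k - 1), ∀ y ∈ extGrade M (n - k - 1),
      σ ^ (k + 1) * x = σ ^ (k + 1) * y → x = y)
    (α : ExteriorAlgebra ℂ M) (hα : α ∈ extGrade M (n - k))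
    (hαprim : σ ^ (k + 1) * α = 0)
    (γ₀ γ₁ : ExteriorAlgebra ℂ M)
    (hγ₀ : γ₀ ∈ extGrade M (n - k + 1)) (hγ₀prim : σ ^ k * γ₀ = 0)
    (hγ₁ : γ₁ ∈ extGrade M (n - k - 1)) (hγ₁prim : σ ^ (k + 2) * γ₁ = 0)
    (hdec : CliffordAlgebra.contractLeft ξ σ * α = γ₀ + σ * γ₁) :
    CliffordAlgebra.contractLeft ξ α = (-((k : ℂ) + 1)) • γ₁ :=
  stmt8_general n k hkn ξ σ hσ hinj α hα hαprim γ₀ γ₁ hγ₀prim hγ₁ hdec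
end

section
/- Let V be a 2n-dimensional complex vector space with nondegenerate 2-form σ ∈ ⋀²V*, let ξ ∈ V and β = ι_ξ σ ∈ V*, and let w_σ denote the Weil element of the sl₂(ℂ)-representation on ⋀V* determined by the Lefschetz operator σ∧. Then for every primitive α ∈ ⋀^{n−k}V* and every 0 ≤ j ≤ k: ι_ξ w_σ( (1/j!) σ^j ∧ α ) = w_σ( β ∧ (1/j!) σ^j ∧ α ). In particular, w_σ intertwines the operator of wedge product with β on ⋀^{n−k}V* with the operator of contraction by ξ on ⋀^{n+k}V*. -/
open ExteriorAlgebra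

section aux
variable {M : Type*} [AddCommGroup M] [Module ℂ M]

lemma stmt9_anticomm (u v : M) : ι ℂ u * ι ℂ v = -(ι ℂ v * ι ℂ u) :=
  eq_neg_of_add_eq_zero_left (ι_add_mul_swap u v)

lemma stmt9_comm2 {σ : ExteriorAlgebra ℂ M} (hσ : σ ∈ extGrade M 2) :
    ∀ x : ExteriorAlgebra ℂ M, Commute σ x := by
  have hσ' : σ ∈ (LinearMap.range (ι ℂ : M →ₗ[ℂ] ExteriorAlgebra ℂ M)) *
      (LinearMap.range (ι ℂ : M →ₗ[ℂ] ExteriorAlgebra ℂ M)) := by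
    rwa [extGrade, sq] at hσ
  refine Submodule.mul_induction_on hσ' ?_ ?_
  · rintro _ ⟨a, rfl⟩ _ ⟨b, rfl⟩ x
    induction x using ExteriorAlgebra.induction with
    | algebraMap r => exact (Algebra.commutes r _).symm
    | ι c =>
      show _ = _
      rw [mul_assoc, stmt9_anticomm b c, mul_neg, ← mul_assoc, stmt9_anticomm a c,
        neg_mul, neg_neg, mul_assoc]
    | mul a' b' ha hb => exact ha.mul_right hb
    | add a' b' ha hb => exact ha.add_right hb
  · intro x y hx hy z
    exact (hx z).add_left (hy z)

lemma stmt9_deriv2 (ξ : Module.Dual ℂ M) {σ : ExteriorAlgebra ℂ M} (hσ : σ ∈ extGrade M 2)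
    (z : ExteriorAlgebra ℂ M) :
    CliffordAlgebra.contractLeft ξ (σ * z)
      = CliffordAlgebra.contractLeft ξ σ * z + σ * CliffordAlgebra.contractLeft ξ z := by
  have hσ' : σ ∈ (LinearMap.range (ι ℂ : M →ₗ[ℂ] ExteriorAlgebra ℂ M)) *
      (LinearMap.range (ι ℂ : M →ₗ[ℂ] ExteriorAlgebra ℂ M)) := by
    rwa [extGrade, sq] at hσ
  refine Submodule.mul_induction_on hσ' ?_ ?_
  · rintro _ ⟨a, rfl⟩ _ ⟨b, rfl⟩
    simp only [mul_assoc, CliffordAlgebra.contractLeft_ι_mul, CliffordAlgebra.contractLeft_ι,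
      mul_sub, sub_mul, smul_mul_assoc, mul_smul_comm, Algebra.algebraMap_eq_smul_one,
      smul_mul_assoc, one_mul, mul_one, smul_sub]
    abel
  · intro x y hx hy
    simp only [add_mul, map_add, hx, hy]
    abel

lemma stmt9_cpow (ξ : Module.Dual ℂ M) {σ : ExteriorAlgebra ℂ M} (hσ : σ ∈ extGrade M 2) :
    ∀ (m : ℕ) (y : ExteriorAlgebra ℂ M),
      CliffordAlgebra.contractLeft ξ (σ ^ m * y)
        = ((m : ℕ) : ℂ) • (CliffordAlgebra.contractLeft ξ σ * (σ ^ (m - 1) * y))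
          + σ ^ m * CliffordAlgebra.contractLeft ξ y := by
  intro m
  induction m with
  | zero => intro y; simp
  | succ m ih =>
    intro y
    have h1 : σ ^ (m + 1) * y = σ * (σ ^ m * y) := by rw [pow_succ', mul_assoc]
    rw [h1, stmt9_deriv2 ξ hσ, ih y]
    cases m with
    | zero => simp
    | succ m' =>
      have hc : σ * (CliffordAlgebra.contractLeft ξ σ * (σ ^ (m' + 1 - 1) * y))
          = CliffordAlgebra.contractLeft ξ σ * (σ ^ (m' + 1) * y) := by
        rw [← mul_assoc, (stmt9_comm2 hσ (CliffordAlgebra.contractLeft ξ σ)).eq, mul_assoc,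
          Nat.add_sub_cancel, ← mul_assoc σ, ← pow_succ']
      rw [mul_add, mul_smul_comm, hc, ← mul_assoc σ (σ ^ (m' + 1)), ← pow_succ',
        show m' + 1 + 1 - 1 = m' + 1 from rfl]
      push_cast
      match_scalars <;> ring

lemma stmt9_contract_zero (ξ : Module.Dual ℂ M) {x : ExteriorAlgebra ℂ M}
    (hx : x ∈ extGrade M 0) : CliffordAlgebra.contractLeft ξ x = 0 := by
  rw [extGrade, pow_zero] at hx
  obtain ⟨r, rfl⟩ := Submodule.mem_one.mp hx
  exact CliffordAlgebra.contractLeft_algebraMap _ _ _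

lemma stmt9_contract_mem (ξ : Module.Dual ℂ M) {i : ℕ} {x : ExteriorAlgebra ℂ M}
    (hx : x ∈ extGrade M i) : CliffordAlgebra.contractLeft ξ x ∈ extGrade M (i - 1) := by
  rw [extGrade] at hx ⊢
  induction hx using Submodule.pow_induction_on_left' with
  | algebraMap r => simp [CliffordAlgebra.contractLeft_algebraMap]
  | add x y i hx hy ihx ihy => rw [map_add]; exact add_mem ihx ihy
  | mem_mul m hm i x hx ih =>
    obtain ⟨a, rfl⟩ := hm
    rw [CliffordAlgebra.contractLeft_ι_mul]
    refine sub_mem (Submodule.smul_mem _ _ hx) ?_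
    cases i with
    | zero =>
      have : CliffordAlgebra.contractLeft ξ x = 0 := by
        rw [pow_zero] at hx
        obtain ⟨r, rfl⟩ := Submodule.mem_one.mp hx
        exact CliffordAlgebra.contractLeft_algebraMap _ _ _
      simp [this]
    | succ i' =>
      rw [Nat.succ_sub_one, pow_succ']
      exact Submodule.mul_mem_mul ⟨a, rfl⟩ ih

lemma stmt9_grade_mul {i j : ℕ} {x y : ExteriorAlgebra ℂ M} (hx : x ∈ extGrade M i)
    (hy : y ∈ extGrade M j) : x * y ∈ extGrade M (i + j) := by
  rw [extGrade, pow_add]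
  exact Submodule.mul_mem_mul hx hy

end aux

set_option maxHeartbeats 1000000 in
/-- Work in the exterior algebra over the space `M` of `1`-forms of a
`2n`-dimensional symplectic vector space, with nondegenerate symplectic `2`-form `σ`,
`ξ ∈ Module.Dual ℂ M` giving the contraction operator `ι_ξ`, and `β = ι_ξ σ`.  Let `w` be the
Weil element of the `sl₂(ℂ)`-representation determined by the Lefschetz operator `σ∧`,
characterized on the Lefschetz pieces by
`w((1/j!)·σ^j ∧ α) = ((−1)^j/(k−j)!)·σ^{k−j} ∧ α` for `α ∈ ⋀^{n−k}` primitive and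
`0 ≤ j ≤ k`.  Then for every such `α` and `j`:
`ι_ξ(w((1/j!)·σ^j ∧ α)) = w(β ∧ (1/j!)·σ^j ∧ α)`, i.e. `w` intertwines wedge product with
`β` and contraction with `ξ`. -/
theorem stmt9 {M : Type*} [AddCommGroup M] [Module ℂ M]
    (n : ℕ) (ξ : Module.Dual ℂ M)
    (σ : ExteriorAlgebra ℂ M) (hσ : σ ∈ extGrade M 2)
    (w : ExteriorAlgebra ℂ M →ₗ[ℂ] ExteriorAlgebra ℂ M)
    (hw : ∀ (k j : ℕ), j ≤ k → k ≤ n →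
      ∀ α ∈ extGrade M (n - k), σ ^ (k + 1) * α = 0 →
        w (((j.factorial : ℂ))⁻¹ • (σ ^ j * α))
          = ((-1 : ℂ) ^ j * (((k - j).factorial : ℂ))⁻¹) • (σ ^ (k - j) * α))
    (k j : ℕ) (hjk : j ≤ k) (hkn : k ≤ n)
    (α : ExteriorAlgebra ℂ M) (hα : α ∈ extGrade M (n - k))
    (hαprim : σ ^ (k + 1) * α = 0) :
    CliffordAlgebra.contractLeft ξ (w (((j.factorial : ℂ))⁻¹ • (σ ^ j * α)))
      = w (CliffordAlgebra.contractLeft ξ σ * (((j.factorial : ℂ))⁻¹ • (σ ^ j * α))) := by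
  classical
  set β := CliffordAlgebra.contractLeft ξ σ with hβdef
  set A' := CliffordAlgebra.contractLeft ξ α with hA'def
  have hcomm : ∀ x : ExteriorAlgebra ℂ M, Commute σ x := stmt9_comm2 hσ
  have hpowmul := stmt9_cpow ξ hσ
  have hβmem : β ∈ extGrade M 1 := by
    simpa using stmt9_contract_mem ξ hσ
  have hA'mem : A' ∈ extGrade M (n - (k + 1)) := by
    have := stmt9_contract_mem ξ hα
    rwa [show n - k - 1 = n - (k + 1) by omega] at this
  have hk1 : ((k : ℂ) + 1) ≠ 0 := Nat.cast_add_one_ne_zero k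
  set e : ℂ := ((k : ℂ) + 1)⁻¹ with hedef
  -- σ^{k+2} * A' = 0
  have hA'prim : σ ^ (k + 2) * A' = 0 := by
    have h0 : σ ^ (k + 2) * α = 0 := by
      rw [pow_succ', mul_assoc, hαprim, mul_zero]
    have h1 := hpowmul (k + 2) α
    rw [h0, map_zero, show k + 2 - 1 = k + 1 from rfl, hαprim, mul_zero, smul_zero,
      zero_add] at h1
    exact h1.symm
  -- key identity
  have hkey : ((k : ℂ) + 1) • (β * (σ ^ k * α)) + σ ^ (k + 1) * A' = 0 := by
    have h1 := hpowmul (k + 1) α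
    rw [hαprim, map_zero, Nat.add_sub_cancel] at h1
    push_cast at h1
    linear_combination (norm := module) -h1
  set γ := β * α + e • (σ * A') with hγdef
  set δ := (-e) • A' with hδdef
  have hsplit : β * α = γ + σ * δ := by
    rw [hγdef, hδdef, mul_smul_comm]
    module
  have hγprim : σ ^ k * γ = 0 := by
    have h2 : σ ^ (k + 1) * A' = -(((k : ℂ) + 1) • (β * (σ ^ k * α))) :=
      eq_neg_of_add_eq_zero_right hkey
    have hc : σ ^ k * (β * α) = β * (σ ^ k * α) := by
      rw [← mul_assoc, ((hcomm β).pow_left k).eq, mul_assoc]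
    rw [hγdef, mul_add, hc, mul_smul_comm, ← mul_assoc (σ ^ k) σ A', ← pow_succ, h2, smul_neg,
      smul_smul, hedef, inv_mul_cancel₀ hk1, one_smul, add_neg_cancel]
  have hδprim : σ ^ (k + 1 + 1) * δ = 0 := by
    rw [hδdef, mul_smul_comm, show k + 1 + 1 = k + 2 from rfl, hA'prim, smul_zero]
  have hA'0 : n ≤ k → A' = 0 := fun h => by
    refine stmt9_contract_zero ξ ?_
    rwa [show n - k = 0 by omega] at hα
  -- LHS
  rw [hw k j hjk hkn α hα hαprim, map_smul, hpowmul (k - j) α]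
  -- RHS : split β * (c • σ^j α)
  have hβmul : β * ((j.factorial : ℂ)⁻¹ • (σ ^ j * α))
      = (j.factorial : ℂ)⁻¹ • (σ ^ j * γ) + (j.factorial : ℂ)⁻¹ • (σ ^ (j + 1) * δ) := by
    rw [mul_smul_comm, ← mul_assoc β (σ ^ j) α, ← ((hcomm β).pow_left j).eq,
      mul_assoc (σ ^ j) β α, hsplit, mul_add, ← mul_assoc (σ ^ j) σ δ, ← pow_succ, smul_add]
  rw [hβmul, map_add, map_smul, map_smul]
  -- Term B
  have hfac : (j.factorial : ℂ)⁻¹ = ((j : ℂ) + 1) * ((j + 1).factorial : ℂ)⁻¹ := by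
    rw [Nat.factorial_succ]
    push_cast
    rw [mul_inv]
    rw [mul_inv_cancel_left₀]
    exact Nat.cast_add_one_ne_zero j
  have hTBeq : (j.factorial : ℂ)⁻¹ • w (σ ^ (j + 1) * δ)
      = (((j : ℂ) + 1) * ((-1 : ℂ) ^ (j + 1) * (((k - j).factorial : ℂ))⁻¹)) • (σ ^ (k - j) * δ) := by
    rcases lt_or_ge k n with hkn2 | hkn2
    · have hδmem : δ ∈ extGrade M (n - (k + 1)) := Submodule.smul_mem _ _ hA'mem
      have h3 := hw (k + 1) (j + 1) (by omega) (by omega) δ hδmem hδprim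
      rw [show k + 1 - (j + 1) = k - j by omega] at h3
      rw [hfac, mul_smul, ← map_smul w, h3, smul_smul]
    · have h0 : A' = 0 := hA'0 hkn2
      rw [hδdef, h0, smul_zero, mul_zero, map_zero, smul_zero, mul_zero, smul_zero]
  rw [hTBeq]
  rcases eq_or_lt_of_le hjk with rfl | hjk'
  · -- j = k
    rw [hγprim, map_zero, smul_zero, zero_add]
    simp only [Nat.sub_self, Nat.cast_zero, zero_smul, zero_add, pow_zero, one_mul,
      Nat.factorial_zero, Nat.cast_one, inv_one, mul_one, hδdef, smul_smul]
    have hj1 : ((j : ℂ) + 1) ≠ 0 := Nat.cast_add_one_ne_zero j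
    match_scalars
    rw [hedef]
    field_simp
    ring
  · -- j < k
    have hγmem : γ ∈ extGrade M (n - (k - 1)) := by
      have h1 : β * α ∈ extGrade M (n - (k - 1)) := by
        have := stmt9_grade_mul hβmem hα
        rwa [show 1 + (n - k) = n - (k - 1) by omega] at this
      refine Submodule.add_mem _ h1 ?_
      rcases lt_or_ge k n with h | h
      · refine Submodule.smul_mem _ _ ?_
        have := stmt9_grade_mul hσ hA'mem
        rwa [show 2 + (n - (k + 1)) = n - (k - 1) by omega] at this
      · rw [hA'0 h, mul_zero, smul_zero]
        exact zero_mem _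
    have hγ := hw (k - 1) j (by omega) (by omega) γ hγmem
      (by rw [show k - 1 + 1 = k by omega]; exact hγprim)
    rw [map_smul] at hγ
    rw [hγ, show k - 1 - j = k - j - 1 by omega]
    have hX : σ ^ (k - j - 1) * (β * α) = β * (σ ^ (k - j - 1) * α) := by
      rw [← mul_assoc, ((hcomm β).pow_left _).eq, mul_assoc]
    have hY : σ ^ (k - j - 1) * (σ * A') = σ ^ (k - j) * A' := by
      rw [← mul_assoc, ← pow_succ, show k - j - 1 + 1 = k - j by omega]
    rw [hγdef, hδdef, mul_add, hX, mul_smul_comm, hY, mul_smul_comm]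
    have hfac2 : ((k - j).factorial : ℂ) = ((k - j : ℕ) : ℂ) * ((k - j - 1).factorial : ℂ) := by
      obtain ⟨m, hm⟩ : ∃ m, k - j = m + 1 := ⟨k - j - 1, by omega⟩
      rw [hm, Nat.factorial_succ, show m + 1 - 1 = m from rfl]
      push_cast
      ring
    have hne1 : ((k - j : ℕ) : ℂ) ≠ 0 := by
      exact_mod_cast (by omega : (k - j : ℕ) ≠ 0)
    have hne2 : (((k - j - 1).factorial : ℕ) : ℂ) ≠ 0 := by
      exact_mod_cast (k - j - 1).factorial_ne_zero
    have hcast : ((k - j : ℕ) : ℂ) = (k : ℂ) - (j : ℂ) := by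
      push_cast [Nat.cast_sub hjk]
      ring
    have hne1' : (k : ℂ) - (j : ℂ) ≠ 0 := hcast ▸ hne1
    match_scalars
    · rw [hfac2, mul_inv]
      field_simp [hne1, hne2]
    · rw [hfac2, mul_inv, hedef, hcast]
      field_simp [hne1', hne2, hk1]
      ring
end

section
/- Let V = ⊕_{i,k∈ℤ} V_{i,k} be a bigraded complex vector space, finite-dimensional in each degree and zero outside a finite range, equipped with operators e₁ : V_{i,k} → V_{i+2,k+1}, f₂ : V_{i,k} → V_{i+1,k+2} such that: (i) e₁^i : V_{−i,k} → V_{i,i+k} is an isomorphism for all i ≥ 1 and k; (ii) f₂^k : V_{i,−k} → V_{i+k,k} is an isomorphism for all k ≥ 1 and i; (iii) [e₁, f₂] = 0. Then for all i, k: dim V_{i,k} = dim V_{k,i}. -/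
open Module

/-- A bijection of a linear map between two submodules gives equal finrank. -/
lemma bijOn_finrank_eq {W : Type*} [AddCommGroup W] [Module ℂ W]
    (f : Module.End ℂ W) (p q : Submodule ℂ W) (h : Set.BijOn (⇑f) (p : Set W) q) :
    finrank ℂ p = finrank ℂ q := by
  have hmap : ∀ x ∈ p, f x ∈ q := fun x hx => h.mapsTo hx
  let g : p →ₗ[ℂ] q := f.restrict hmap
  have hg : Function.Bijective g := by
    constructor
    · intro x y hxy
      have : f (x : W) = f (y : W) := congrArg Subtype.val hxy
      exact Subtype.ext (h.injOn x.2 y.2 this)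
    · intro y
      obtain ⟨x, hx, hfx⟩ := h.surjOn y.2
      exact ⟨⟨x, hx⟩, Subtype.ext hfx⟩
  exact (LinearEquiv.ofBijective g hg).finrank_eq

/-- Let `V = ⊕_{i,k} V_{i,k}` be a bigraded complex vector space
(realized as a family of finite-dimensional subspaces of an ambient space `W`, vanishing
outside a finite range), with operators `e₁ : V_{i,k} → V_{i+2,k+1}` and
`f₂ : V_{i,k} → V_{i+1,k+2}` such that `e₁^i : V_{−i,k} → V_{i,i+k}` is bijective for all
`i ≥ 1`, `f₂^k : V_{i,−k} → V_{i+k,k}` is bijective for all `k ≥ 1`, and `[e₁, f₂] = 0`.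
Then `dim V_{i,k} = dim V_{k,i}` for all `i, k`. -/
theorem stmt13 {W : Type*} [AddCommGroup W] [Module ℂ W]
    (V : ℤ → ℤ → Submodule ℂ W)
    (hfd : ∀ i k : ℤ, FiniteDimensional ℂ (V i k))
    (n : ℕ) (hbound : ∀ i k : ℤ, ((n : ℤ) < |i| ∨ (n : ℤ) < |k|) → V i k = ⊥)
    (e₁ f₂ : Module.End ℂ W)
    (he₁ : ∀ i k : ℤ, (V i k).map e₁ ≤ V (i + 2) (k + 1))
    (hf₂ : ∀ i k : ℤ, (V i k).map f₂ ≤ V (i + 1) (k + 2))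
    (hHL₁ : ∀ i : ℕ, 1 ≤ i → ∀ k : ℤ,
      Set.BijOn (⇑(e₁ ^ i)) (V (-(i : ℤ)) k) (V (i : ℤ) ((i : ℤ) + k)))
    (hHL₂ : ∀ k : ℕ, 1 ≤ k → ∀ i : ℤ,
      Set.BijOn (⇑(f₂ ^ k)) (V i (-(k : ℤ))) (V (i + (k : ℤ)) (k : ℤ)))
    (hcomm : e₁ * f₂ = f₂ * e₁) :
    ∀ i k : ℤ, finrank ℂ (V i k) = finrank ℂ (V k i) := by
  -- Reflection A : dim V_{i,k} = dim V_{-i, k-i}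
  have A : ∀ i k : ℤ, finrank ℂ (V i k) = finrank ℂ (V (-i) (k - i)) := by
    intro i k
    rcases lt_trichotomy i 0 with hi | hi | hi
    · -- i < 0; use hHL₁ at m = -i
      set m : ℕ := (-i).toNat with hm
      have hmi : (m : ℤ) = -i := Int.toNat_of_nonneg (by omega)
      have h1 : 1 ≤ m := by omega
      have := bijOn_finrank_eq (e₁ ^ m) _ _ (hHL₁ m h1 k)
      rw [hmi] at this
      have h2 : -i + k = k - i := by ring
      rw [neg_neg, h2] at this
      exact this
    · subst hi; rw [neg_zero, sub_zero]
    · -- i > 0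
      set m : ℕ := i.toNat with hm
      have hmi : (m : ℤ) = i := Int.toNat_of_nonneg (by omega)
      have h1 : 1 ≤ m := by omega
      have := bijOn_finrank_eq (e₁ ^ m) _ _ (hHL₁ m h1 (k - i))
      rw [hmi] at this
      have h2 : i + (k - i) = k := by ring
      rw [h2] at this
      exact this.symm
  -- Reflection B : dim V_{i,k} = dim V_{i-k, -k}
  have B : ∀ i k : ℤ, finrank ℂ (V i k) = finrank ℂ (V (i - k) (-k)) := by
    intro i k
    rcases lt_trichotomy k 0 with hk | hk | hk
    · set m : ℕ := (-k).toNat with hm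
      have hmi : (m : ℤ) = -k := Int.toNat_of_nonneg (by omega)
      have h1 : 1 ≤ m := by omega
      have := bijOn_finrank_eq (f₂ ^ m) _ _ (hHL₂ m h1 i)
      rw [hmi] at this
      have h2 : i + -k = i - k := by ring
      rw [neg_neg, h2] at this
      exact this
    · subst hk; rw [neg_zero, sub_zero]
    · set m : ℕ := k.toNat with hm
      have hmi : (m : ℤ) = k := Int.toNat_of_nonneg (by omega)
      have h1 : 1 ≤ m := by omega
      have := bijOn_finrank_eq (f₂ ^ m) _ _ (hHL₂ m h1 (i - k))
      rw [hmi] at this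
      have h2 : i - k + k = i := by ring
      rw [h2] at this
      exact this.symm
  intro i k
  calc finrank ℂ (V i k) = finrank ℂ (V (-i) (k - i)) := A i k
    _ = finrank ℂ (V (-i - (k - i)) (-(k - i))) := B (-i) (k - i)
    _ = finrank ℂ (V (-k) (i - k)) := by
        have h1 : -i - (k - i) = -k := by ring
        have h2 : -(k - i) = i - k := by ring
        rw [h1, h2]
    _ = finrank ℂ (V k i) := (A k i).symm
end

section
/- Let A, B, C, D be objects in the derived category of an abelian category and suppose morphisms f : A → C, g : B → C, h : B → D are such that the matrix morphism [[f,g],[0,h]] : A ⊕ B → C ⊕ D is an isomorphism. Then C ≅ A ⊕ Cone(f) and B ≅ Cone(f) ⊕ D, where Cone(f) is the mapping cone of f. -/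
/-!
The upper triangular shape of the matrix `φ` gives `inl ≫ φ = f ≫ inl`, so `inl ≫ φ⁻¹ ≫ fst`
is a retraction of `f`. A split mono sits in a split distinguished triangle, whence `X ≅ A ⊞ Z` with `f` becoming
`inl`. Transporting `φ` along this gives `A ⊞ B ≅ A ⊞ (Z ⊞ D)` whose `A ⟶ A` entry is the
identity, and Gaussian elimination cancels `A`.
-/

open CategoryTheory Limits Pretriangulated

namespace CategoryTheory.Limits

variable {C : Type*} [Category C] [Preadditive C] [HasBinaryBiproducts C]
  {A B X D : C} {f : A ⟶ X} {g : B ⟶ X} {h : B ⟶ D}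

lemma biprod.inl_desc_lift_lift_zero :
    biprod.inl ≫ biprod.desc (biprod.lift f (0 : A ⟶ D)) (biprod.lift g h) = f ≫ biprod.inl := by
  ext <;> simp

lemma isSplitMono_of_isIso_biprod_desc_lift_lift_zero
    (hiso : IsIso (biprod.desc (biprod.lift f (0 : A ⟶ D)) (biprod.lift g h))) :
    IsSplitMono f :=
  IsSplitMono.mk' ⟨biprod.inl ≫ inv (biprod.desc (biprod.lift f 0) (biprod.lift g h)) ≫ biprod.fst,
    by
      rw [← Category.assoc, ← biprod.inl_desc_lift_lift_zero (g := g) (h := h),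
        Category.assoc, IsIso.hom_inv_id_assoc, biprod.inl_fst]⟩

lemma nonempty_iso_biprod_of_isIso_biprod_desc_lift_lift_zero {Z : C} (e : X ≅ A ⊞ Z)
    (he : f ≫ e.hom = biprod.inl)
    (hiso : IsIso (biprod.desc (biprod.lift f (0 : A ⟶ D)) (biprod.lift g h))) :
    Nonempty (B ≅ Z ⊞ D) := by
  let ψ : A ⊞ B ≅ A ⊞ (Z ⊞ D) :=
    asIso (biprod.desc (biprod.lift f 0) (biprod.lift g h)) ≪≫ biprod.mapIso e (Iso.refl D) ≪≫
      biprod.associator A Z D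
  have hψ : biprod.inl ≫ ψ.hom ≫ biprod.fst = 𝟙 A := by
    simp [ψ, reassoc_of% he, biprod.associator]
  have : IsIso (biprod.inl ≫ ψ.hom ≫ biprod.fst) := by
    rw [hψ]
    infer_instance
  exact ⟨Biprod.isoElim ψ⟩

end CategoryTheory.Limits

/-- In the derived category of an abelian category (more generally a
pretriangulated category with biproducts in which the argument applies), if
`f : A ⟶ X`, `g : B ⟶ X`, `h : B ⟶ D` are such that the matrix morphism
`[[f,g],[0,h]] : A ⊞ B ⟶ X ⊞ D` is an isomorphism, then for any cone `Z` of `f`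
(i.e. any distinguished triangle `A ⟶ X ⟶ Z ⟶ A[1]` with first map `f`) one has
`X ≅ A ⊞ Z` and `B ≅ Z ⊞ D`. -/
theorem stmt18 {𝒜 : Type*} [Category 𝒜] [Abelian 𝒜] [HasDerivedCategory 𝒜]
    (A B X D Z : DerivedCategory 𝒜)
    (f : A ⟶ X) (g : B ⟶ X) (h : B ⟶ D)
    (g' : X ⟶ Z) (h' : Z ⟶ A⟦(1 : ℤ)⟧)
    (hT : Triangle.mk f g' h' ∈ distTriang (DerivedCategory 𝒜))
    (hiso : IsIso (biprod.desc (biprod.lift f (0 : A ⟶ D)) (biprod.lift g h))) :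
    Nonempty (X ≅ A ⊞ Z) ∧ Nonempty (B ≅ Z ⊞ D) := by
  have : IsSplitMono f := isSplitMono_of_isIso_biprod_desc_lift_lift_zero hiso
  obtain ⟨e, he, -⟩ := exists_iso_binaryBiproduct_of_distTriang _ hT
    (Triangle.mor₃_eq_zero_of_mono₁ _ hT (inferInstanceAs (Mono f)))
  exact ⟨⟨e⟩, nonempty_iso_biprod_of_isIso_biprod_desc_lift_lift_zero e he hiso⟩
end

section
/- Let L be a Lie algebra with an sl₂-triple (X₂, Y₂, H₂) acting on it via the adjoint action, and suppose τ = Σ_{j≤J} τ_j is a finite sum of elements where each τ_j has ad-H₂-weight −2, graded by a second integer grading in which X₂ has degree 1, τ_j has degree j, and suppose σ = X₂ + σ₀ + σ₋₁ + ⋯ (with σ_j of degree j) satisfies [σ, τ] = H₂ where H₂ has degree 0. Then τ_j = 0 for all j ≥ 0, and τ₋₁ = Y₂. -/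
/-!
The relation `[σ, τ] = H₂` in degree `m + 1` reads `[X₂, τ_m] = δ_{m,-1} H₂` as soon as `τ` vanishes
above degree `m`. Descending from the top degree, each `τ_m` with `m ≥ 0` is therefore a primitive
vector of `ad H₂`-weight `-2`, which cannot exist in a finite-dimensional `sl₂`-representation.
Then `[X₂, τ₋₁ - Y₂] = H₂ - H₂ = 0`, so `τ₋₁ - Y₂` is such a vector as well.
-/

lemma IsSl2Triple.eq_zero_of_lie_e_eq_zero {R L M : Type*} [CommRing R] [IsDomain R] [CharZero R]
    [LieRing L] [LieAlgebra R L] [AddCommGroup M] [Module R M] [LieRingModule L M]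
    [LieModule R L M] [IsNoetherian R M] [Module.IsTorsionFree R M] {h e f : L}
    (t : IsSl2Triple h e f) {m : M} {μ : R} (hμ : ∀ n : ℕ, μ ≠ n)
    (hh : ⁅h, m⁆ = μ • m) (he : ⁅e, m⁆ = 0) : m = 0 := by
  by_contra hm
  obtain ⟨n, hn⟩ := (⟨hm, hh, he⟩ : t.HasPrimitiveVectorWith m μ).exists_nat
  exact hμ n hn

lemma Finset.sum_Icc_lie_eq_lie_of_forall_gt_eq_zero {L : Type*} [LieRing L] (s t : ℤ → L)
    {N a m : ℤ} (hN : N ≤ a) (ht : ∀ k, m < k → t k = 0) :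
    ∑ j ∈ Finset.Icc N a, ⁅s j, t (m + a - j)⁆ = ⁅s a, t m⁆ := by
  rw [Finset.sum_eq_single_of_mem a (by simp [hN]), add_sub_cancel_right]
  intro j hj hja
  rw [ht _ (by rw [Finset.mem_Icc] at hj; omega), lie_zero]

lemma Int.forall_ge_eq_zero_of_forall_gt_eq_zero {M : Type*} [Zero M] (f : ℤ → M) {a J : ℤ}
    (htop : ∀ k, J < k → f k = 0) (hstep : ∀ m, a ≤ m → (∀ k, m < k → f k = 0) → f m = 0) :
    ∀ m, a ≤ m → f m = 0 := by
  by_contra! hne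
  obtain ⟨g, ⟨hag, hg⟩, hmax⟩ := Int.exists_greatest_of_bdd (P := fun k => a ≤ k ∧ f k ≠ 0)
    ⟨J, fun k hk => not_lt.mp fun hJk => hk.2 (htop k hJk)⟩ hne
  refine hg (hstep g hag fun k hgk => ?_)
  by_contra hk
  have := hmax k ⟨hag.trans hgk.le, hk⟩
  omega

theorem stmt19_general {W : Type*} [AddCommGroup W] [Module ℂ W] [FiniteDimensional ℂ W]
    (X₂ Y₂ H₂ : Module.End ℂ W)
    (hHX : ⁅H₂, X₂⁆ = (2 : ℂ) • X₂) (hHY : ⁅H₂, Y₂⁆ = (-2 : ℂ) • Y₂) (hXY : ⁅X₂, Y₂⁆ = H₂)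
    (s t : ℤ → Module.End ℂ W) (N J : ℤ)
    -- the components of `σ`:  `σ₁ = X₂`, vanishing above degree `1` and below degree `N`
    (hs1 : s 1 = X₂) (hs_bot : ∀ j : ℤ, j < N → s j = 0)
    -- the components of `τ`, finitely many
    (ht_top : ∀ j : ℤ, J < j → t j = 0)
    -- weights under `ad H₂`
    (htwt : ∀ j : ℤ, ⁅H₂, t j⁆ = (-2 : ℂ) • t j)
    -- the relation `[σ, τ] = H₂`, expanded degree by degree
    (hrel : ∀ m : ℤ, ∑ j ∈ Finset.Icc N 1, ⁅s j, t (m - j)⁆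
      = if m = 0 then H₂ else 0) :
    (∀ j : ℤ, 0 ≤ j → t j = 0) ∧ t (-1) = Y₂ := by
  let _ : LieRing (Module.End ℂ W) := LieRing.ofAssociativeRing
  by_cases hH0 : H₂ = 0
  · have weight_eq_zero : ∀ v : Module.End ℂ W, ⁅H₂, v⁆ = (-2 : ℂ) • v → v = 0 := fun v hv => by
      simpa [hH0, eq_comm] using hv
    exact ⟨fun j _ => weight_eq_zero _ (htwt j), by
      rw [weight_eq_zero _ (htwt _), weight_eq_zero _ hHY]⟩
  have triple : IsSl2Triple H₂ X₂ Y₂ :=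
    ⟨hH0, hXY, by rw [hHX]; module, by rw [hHY]; module⟩
  have primitive_eq_zero : ∀ v : Module.End ℂ W, ⁅H₂, v⁆ = (-2 : ℂ) • v → ⁅X₂, v⁆ = 0 → v = 0 :=
    fun v hh he => triple.eq_zero_of_lie_e_eq_zero (fun n h => by norm_cast at h) hh he
  have hN : N ≤ 1 := not_lt.mp fun h => triple.e_ne_zero (hs1 ▸ hs_bot 1 h)
  have lie_top : ∀ m, (∀ k, m < k → t k = 0) → ⁅X₂, t m⁆ = if m + 1 = 0 then H₂ else 0 :=
    fun m hm => by rw [← hs1, ← Finset.sum_Icc_lie_eq_lie_of_forall_gt_eq_zero s t hN hm, hrel]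
  have nonneg : ∀ j, 0 ≤ j → t j = 0 :=
    Int.forall_ge_eq_zero_of_forall_gt_eq_zero t ht_top fun m hm hk =>
      primitive_eq_zero _ (htwt m) (by rw [lie_top m hk, if_neg (by omega)])
  refine ⟨nonneg, sub_eq_zero.mp (primitive_eq_zero _ ?_ ?_)⟩
  · rw [lie_sub, htwt, hHY, smul_sub]
  · rw [lie_sub, lie_top (-1) fun k hk => nonneg k (by omega), if_pos (by norm_num), hXY, sub_self]

/-- Let `L` be the Lie algebra of operators on a (finite-dimensional,
bigraded) object, with commutator bracket, containing an `sl₂`-triple `(X₂, Y₂, H₂)`.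
Suppose `τ = ∑_{j ≤ J} τ_j` is a finite sum of components of `ad H₂`-weight `−2`, graded by a
second integer grading in which `X₂ = σ₁` has degree `1` and `τ_j` has degree `j`, and
`σ = X₂ + σ₀ + σ₋₁ + ⋯` (each `σ_j` of degree `j` and `ad H₂`-weight `2`) satisfies
`[σ, τ] = H₂`, where `H₂` has degree `0`; the relation is imposed degree by degree.
Then `τ_j = 0` for all `j ≥ 0`, and `τ₋₁ = Y₂`. -/
theorem stmt19 {W : Type*} [AddCommGroup W] [Module ℂ W] [FiniteDimensional ℂ W]
    (X₂ Y₂ H₂ : Module.End ℂ W)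
    (hHX : ⁅H₂, X₂⁆ = (2 : ℂ) • X₂) (hHY : ⁅H₂, Y₂⁆ = (-2 : ℂ) • Y₂) (hXY : ⁅X₂, Y₂⁆ = H₂)
    (s t : ℤ → Module.End ℂ W) (N J : ℤ)
    -- the components of `σ`:  `σ₁ = X₂`, vanishing above degree `1` and below degree `N`
    (hs1 : s 1 = X₂) (hs_top : ∀ j : ℤ, 1 < j → s j = 0) (hs_bot : ∀ j : ℤ, j < N → s j = 0)
    -- the components of `τ`, finitely many
    (ht_top : ∀ j : ℤ, J < j → t j = 0) (ht_bot : ∀ j : ℤ, j < N → t j = 0)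
    -- weights under `ad H₂`
    (hswt : ∀ j : ℤ, ⁅H₂, s j⁆ = (2 : ℂ) • s j)
    (htwt : ∀ j : ℤ, ⁅H₂, t j⁆ = (-2 : ℂ) • t j)
    -- the relation `[σ, τ] = H₂`, expanded degree by degree
    (hrel : ∀ m : ℤ, ∑ j ∈ Finset.Icc N 1, ⁅s j, t (m - j)⁆
      = if m = 0 then H₂ else 0) :
    (∀ j : ℤ, 0 ≤ j → t j = 0) ∧ t (-1) = Y₂ :=
  stmt19_general X₂ Y₂ H₂ hHX hHY hXY s t N J hs1 hs_bot ht_top htwt hrel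
end
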